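/- arXiv:2307.00075 — 7 statements merged into one kernel-verified Lean document; each statement's English description precedes it below -/
import Mathlib

section
/- Let p ∈ S_c and u, v ∈ T_{c,0}. Then (i) the curve t ↦ exp_p(v + t·u) has derivative at t = 0 equal to R_{exp_p(v)} u, and (ii) the curve t ↦ exp_{p + t·u}(v), defined for t in a neighborhood of 0 so that p + t·u ∈ S_c, has derivative at t = 0 equal to R_{exp_p(v)}(u/p), where u/p denotes the componentwise quotient. -/
/- STATEMENT 2: Let p ∈ S_c and u, v ∈ T_{c,0}. Then (i) the curve t ↦ exp_p(v + t·u)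
has derivative at t = 0 equal to R_{exp_p(v)} u, and (ii) the curve t ↦ exp_{p + t·u}(v)
has derivative at t = 0 equal to R_{exp_p(v)}(u/p), componentwise quotient u/p. -/

noncomputable section
open Finset

/-- `p` lies in the relative interior `S_c` of the probability simplex. -/
def InSimplex {c : ℕ} (p : Fin c → ℝ) : Prop := (∀ i, 0 < p i) ∧ ∑ i, p i = 1

/-- The replicator operator `R_p v = Diag(p) v − ⟨p, v⟩ p`. -/
def Rp {c : ℕ} (p v : Fin c → ℝ) : Fin c → ℝ :=
  fun i => p i * v i - (∑ j, p j * v j) * p i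

/-- The simplex exponential map `exp_p(v) = (p · e^v)/⟨p, e^v⟩` (componentwise). -/
def expS {c : ℕ} (p v : Fin c → ℝ) : Fin c → ℝ :=
  fun i => p i * Real.exp (v i) / ∑ j, p j * Real.exp (v j)

theorem stmt2 {c : ℕ} (hc : 2 ≤ c) (p u v : Fin c → ℝ) (hp : InSimplex p)
    (hu : ∑ i, u i = 0) (hv : ∑ i, v i = 0) :
    HasDerivAt (fun t : ℝ => expS p (v + t • u)) (Rp (expS p v) u) 0 ∧
    HasDerivAt (fun t : ℝ => expS (p + t • u) v)
      (Rp (expS p v) (fun i => u i / p i)) 0 := by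
  obtain ⟨hpos, hsum⟩ := hp
  have hD : 0 < ∑ j, p j * Real.exp (v j) := by
    apply Finset.sum_pos
    · exact fun j _ => mul_pos (hpos j) (Real.exp_pos _)
    · exact ⟨⟨0, lt_of_lt_of_le two_pos hc⟩, Finset.mem_univ _⟩
  have hDne : (∑ j, p j * Real.exp (v j)) ≠ 0 := ne_of_gt hD
  constructor
  · rw [hasDerivAt_pi]
    intro i
    simp only [expS, Pi.add_apply, Pi.smul_apply, smul_eq_mul]
    have hN : HasDerivAt (fun t : ℝ => p i * Real.exp (v i + t * u i))
        (p i * (Real.exp (v i + 0 * u i) * u i)) 0 := by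
      exact (((hasDerivAt_mul_const (u i)).const_add (v i)).exp).const_mul (p i)
    have hDt : HasDerivAt (fun t : ℝ => ∑ j, p j * Real.exp (v j + t * u j))
        (∑ j, p j * (Real.exp (v j + 0 * u j) * u j)) 0 := by
      apply HasDerivAt.fun_sum
      intro j _
      exact (((hasDerivAt_mul_const (u j)).const_add (v j)).exp).const_mul (p j)
    have hne : (∑ j, p j * Real.exp (v j + 0 * u j)) ≠ 0 := by
      simpa using hDne
    have := hN.fun_div hDt hne
    convert this using 1
    · rfl
    simp only [zero_mul, add_zero]
    have hsum2 : ∑ j, expS p v j * u j = (∑ j, p j * Real.exp (v j) * u j) /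
        (∑ j, p j * Real.exp (v j)) := by
      rw [Finset.sum_div]
      refine Finset.sum_congr rfl fun j _ => ?_
      simp [expS]; ring
    have key : ∑ j, p j * (Real.exp (v j) * u j) = ∑ j, p j * Real.exp (v j) * u j := by
      exact Finset.sum_congr rfl fun j _ => by ring
    simp only [Rp]
    rw [key]
    rw [hsum2]
    simp only [expS]
    generalize (∑ j, p j * Real.exp (v j) * u j) = S at *
    generalize hg : (∑ j, p j * Real.exp (v j)) = D at *
    field_simp
  · rw [hasDerivAt_pi]
    intro i
    simp only [expS, Pi.add_apply, Pi.smul_apply, smul_eq_mul]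
    have hN : HasDerivAt (fun t : ℝ => (p i + t * u i) * Real.exp (v i))
        (u i * Real.exp (v i)) 0 := by
      exact ((hasDerivAt_mul_const (u i)).const_add (p i)).mul_const _
    have hDt : HasDerivAt (fun t : ℝ => ∑ j, (p j + t * u j) * Real.exp (v j))
        (∑ j, u j * Real.exp (v j)) 0 := by
      apply HasDerivAt.fun_sum
      intro j _
      exact ((hasDerivAt_mul_const (u j)).const_add (p j)).mul_const _
    have hne : (∑ j, (p j + 0 * u j) * Real.exp (v j)) ≠ 0 := by
      simpa using hDne
    have := hN.fun_div hDt hne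
    convert this using 1
    · rfl
    simp only [zero_mul, add_zero]
    have hsum2 : ∑ j, expS p v j * (u j / p j) = (∑ j, u j * Real.exp (v j)) /
        (∑ j, p j * Real.exp (v j)) := by
      rw [Finset.sum_div]
      refine Finset.sum_congr rfl fun j _ => ?_
      have := (hpos j).ne'
      simp only [expS]
      field_simp
    simp only [Rp]
    rw [hsum2]
    simp only [expS]
    have hpi := (hpos i).ne'
    generalize (∑ j, u j * Real.exp (v j)) = S at *
    generalize hg : (∑ j, p j * Real.exp (v j)) = D at *
    field_simp
end
end

section
/- Let D ∈ ℝ^c and let q : [0,∞) → S_c be differentiable with q̇(t) = R_{q(t)} q(t) for all t and q(0) = exp_{𝟙/c}(−D). Then the curve p(t) := exp_{𝟙/c}(∫₀ᵗ q(τ) dτ) satisfies p(0) = 𝟙/c and the single-vertex assignment flow equation ṗ(t) = R_{p(t)} L_{p(t)}(D) for all t, where L_p(D) := exp_p(−D). -/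
/- STATEMENT 3: Let D ∈ ℝ^c and let q : [0,∞) → S_c be differentiable with
q̇(t) = R_{q(t)} q(t) for all t and q(0) = exp_{𝟙/c}(−D). Then the curve
p(t) := exp_{𝟙/c}(∫₀ᵗ q(τ) dτ) satisfies p(0) = 𝟙/c and the single-vertex assignment
flow equation ṗ(t) = R_{p(t)} L_{p(t)}(D) for all t, where L_p(D) := exp_p(−D). -/

noncomputable section
open Finset

/-- The barycenter `𝟙/c` of the simplex. -/
def bary (c : ℕ) : Fin c → ℝ := fun _ => 1 / c

/-- The likelihood vector `L_p(D) := exp_p(−D)`. -/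
def Lvec {c : ℕ} (p D : Fin c → ℝ) : Fin c → ℝ := expS p (-D)

theorem stmt3 {c : ℕ} (hc : 2 ≤ c) (D : Fin c → ℝ) (q : ℝ → Fin c → ℝ)
    (hq : ∀ t ∈ Set.Ici (0:ℝ), InSimplex (q t))
    (hode : ∀ t ∈ Set.Ici (0:ℝ),
      HasDerivWithinAt q (Rp (q t) (q t)) (Set.Ici 0) t)
    (h0 : q 0 = expS (bary c) (-D)) :
    (fun τ : ℝ => expS (bary c) (∫ τ' in (0:ℝ)..τ, q τ')) 0 = bary c ∧
    ∀ t ∈ Set.Ici (0:ℝ),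
      HasDerivWithinAt (fun τ : ℝ => expS (bary c) (∫ τ' in (0:ℝ)..τ, q τ'))
        (Rp (expS (bary c) (∫ τ' in (0:ℝ)..t, q τ'))
          (Lvec (expS (bary c) (∫ τ' in (0:ℝ)..t, q τ')) D))
        (Set.Ici 0) t := by
  haveI : NeZero c := ⟨by omega⟩
  have hcR : (0:ℝ) < (c:ℝ) := by exact_mod_cast Nat.lt_of_lt_of_le (by norm_num) hc
  set b : ℝ := 1 / c with hbdef
  have hb : 0 < b := by positivity
  -- continuity of q on Ici 0
  have hqc : ContinuousOn q (Set.Ici 0) := fun t ht => (hode t ht).continuousWithinAt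
  have hqci : ∀ i, ContinuousOn (fun τ => q τ i) (Set.Ici 0) := fun i t ht =>
    (continuous_apply i).continuousAt.comp_continuousWithinAt (hqc t ht)
  -- interval integrability
  have hIntq : ∀ t : ℝ, 0 ≤ t → IntervalIntegrable q MeasureTheory.volume 0 t := by
    intro t ht
    apply ContinuousOn.intervalIntegrable
    apply hqc.mono
    rw [Set.uIcc_of_le ht]
    exact Set.Icc_subset_Ici_self
  have hInti : ∀ (i : Fin c) (t : ℝ), 0 ≤ t →
      IntervalIntegrable (fun τ => q τ i) MeasureTheory.volume 0 t := by
    intro i t ht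
    apply ContinuousOn.intervalIntegrable
    apply (hqci i).mono
    rw [Set.uIcc_of_le ht]
    exact Set.Icc_subset_Ici_self
  -- componentwise integral
  set W : Fin c → ℝ → ℝ := fun i t => ∫ τ' in (0:ℝ)..t, q τ' i with hWdef
  have hVW : ∀ t : ℝ, 0 ≤ t → ∀ i, (∫ τ' in (0:ℝ)..t, q τ') i = W i t := by
    intro t ht i
    have h := (ContinuousLinearMap.proj (R := ℝ) (φ := fun _ : Fin c => ℝ)
      i).intervalIntegral_comp_comm (hIntq t ht)
    exact h.symm
  -- derivative of W
  have hW' : ∀ (i : Fin c), ∀ t ∈ Set.Ici (0:ℝ),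
      HasDerivWithinAt (W i) (q t i) (Set.Ici 0) t := by
    intro i t ht
    rcases eq_or_lt_of_le (Set.mem_Ici.mp ht) with h0t | h0t
    · subst h0t
      refine intervalIntegral.integral_hasDerivWithinAt_right (hInti i 0 le_rfl)
        ⟨Set.Ici 0, ?_, ((hqci i).aestronglyMeasurable measurableSet_Ici)⟩
        (((hqci i) 0 Set.self_mem_Ici).mono Set.Ioi_subset_Ici_self)
      exact Filter.mem_of_superset self_mem_nhdsWithin Set.Ioi_subset_Ici_self
    · have hmem : Set.Ici (0:ℝ) ∈ nhds t := Ici_mem_nhds h0t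
      have hAt : HasDerivAt (W i) (q t i) t :=
        intervalIntegral.integral_hasDerivAt_right (hInti i t ht)
          ⟨Set.Ici 0, hmem, ((hqci i).aestronglyMeasurable measurableSet_Ici)⟩
          ((hqci i).continuousAt hmem)
      exact hAt.hasDerivWithinAt
  -- denominator and curve P
  set S : ℝ → ℝ := fun t => ∑ j, b * Real.exp (W j t) with hSdef
  have hS : ∀ t, 0 < S t :=
    fun t => Finset.sum_pos (fun j _ => by positivity) Finset.univ_nonempty
  set P : ℝ → Fin c → ℝ := fun t i => b * Real.exp (W i t) / S t with hPdef
  have hFP : ∀ t : ℝ, 0 ≤ t → expS (bary c) (∫ τ' in (0:ℝ)..t, q τ') = P t := by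
    intro t ht
    funext i
    simp only [expS, bary, hPdef, hSdef, hVW t ht, hbdef]
  -- componentwise ODE for q
  have hq' : ∀ (i : Fin c), ∀ t ∈ Set.Ici (0:ℝ),
      HasDerivWithinAt (fun τ => q τ i)
        (q t i * q t i - (∑ j, q t j * q t j) * q t i) (Set.Ici 0) t := by
    intro i t ht
    have := hasDerivWithinAt_pi.1 (hode t ht) i
    simpa [Rp] using this
  -- the auxiliary function g
  set g : Fin c → ℝ → ℝ := fun i t => q t i * Real.exp (D i - W i t) with hgdef
  have hgpos : ∀ (i : Fin c), ∀ t ∈ Set.Ici (0:ℝ), 0 < g i t := by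
    intro i t ht
    exact mul_pos ((hq t ht).1 i) (Real.exp_pos _)
  have hg' : ∀ (i : Fin c), ∀ t ∈ Set.Ici (0:ℝ),
      HasDerivWithinAt (g i) (-(∑ j, q t j * q t j) * g i t) (Set.Ici 0) t := by
    intro i t ht
    have h2 : HasDerivWithinAt (fun τ => Real.exp (D i - W i τ))
        (Real.exp (D i - W i t) * (0 - q t i)) (Set.Ici 0) t :=
      ((hasDerivWithinAt_const t (Set.Ici 0) (D i)).sub (hW' i t ht)).exp
    have h3 := (hq' i t ht).mul h2
    refine h3.congr_deriv ?_
    simp only [hgdef]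
    ring
  -- the ratio g i / g j is constant on Ici 0
  have hgeq : ∀ (i j : Fin c), ∀ t ∈ Set.Ici (0:ℝ), g i t * g j 0 = g i 0 * g j t := by
    intro i j t ht
    have hr' : ∀ τ ∈ Set.Ici (0:ℝ),
        HasDerivWithinAt (fun τ => g i τ / g j τ) 0 (Set.Ici 0) τ := by
      intro τ hτ
      have h := (hg' i τ hτ).div (hg' j τ hτ) (ne_of_gt (hgpos j τ hτ))
      refine h.congr_deriv ?_
      rw [show -(∑ k, q τ k * q τ k) * g i τ * g j τ -
          g i τ * (-(∑ k, q τ k * q τ k) * g j τ) = 0 by ring]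
      simp
    have hb0 : ‖(fun τ => g i τ / g j τ) t - (fun τ => g i τ / g j τ) 0‖ ≤ 0 * ‖t - 0‖ :=
      Convex.norm_image_sub_le_of_norm_hasDerivWithin_le
        (f' := fun _ => (0:ℝ)) hr' (fun x _ => by simp) (convex_Ici 0)
        Set.self_mem_Ici ht
    have heq : g i t / g j t = g i 0 / g j 0 := by
      have := hb0
      simp only [zero_mul, norm_le_zero_iff, sub_eq_zero] at this
      exact this
    have h1 := (hgpos j t ht).ne'
    have h2 := (hgpos j 0 Set.self_mem_Ici).ne'
    field_simp at heq
    linarith [heq]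
  -- value of g at 0
  have hW0 : ∀ i, W i 0 = 0 := fun i => intervalIntegral.integral_same
  have hg0 : ∀ i, g i 0 = b / (∑ j, b * Real.exp (-D j)) := by
    intro i
    simp only [hgdef, h0, expS, bary, hW0, sub_zero, hbdef]
    rw [div_mul_eq_mul_div, mul_assoc, ← Real.exp_add]
    simp
  -- all g i agree
  have hgsame : ∀ (i j : Fin c), ∀ t ∈ Set.Ici (0:ℝ), g i t = g j t := by
    intro i j t ht
    have h := hgeq i j t ht
    rw [hg0 i, hg0 j] at h
    have hgj := (hgpos j t ht)
    have hZ : (0:ℝ) < b / (∑ k, b * Real.exp (-D k)) := by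
      have : (0:ℝ) < ∑ k, b * Real.exp (-D k) :=
        Finset.sum_pos (fun k _ => by positivity) Finset.univ_nonempty
      positivity
    exact mul_right_cancel₀ hZ.ne' (by linarith)
  -- explicit formula for q
  have hEpos : ∀ t : ℝ, (0:ℝ) < ∑ j, Real.exp (W j t - D j) :=
    fun t => Finset.sum_pos (fun j _ => Real.exp_pos _) Finset.univ_nonempty
  have hqL : ∀ t ∈ Set.Ici (0:ℝ), ∀ i,
      q t i = Real.exp (W i t - D i) / ∑ j, Real.exp (W j t - D j) := by
    intro t ht i
    have hqg : ∀ j, q t j = g j t * Real.exp (W j t - D j) := by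
      intro j
      simp only [hgdef]
      rw [mul_assoc, ← Real.exp_add]
      simp
    have hsum : (1:ℝ) = g i t * ∑ j, Real.exp (W j t - D j) := by
      rw [Finset.mul_sum]
      rw [← (hq t ht).2]
      refine Finset.sum_congr rfl fun j _ => ?_
      rw [hqg j, hgsame j i t ht]
    have hgi : g i t = 1 / ∑ j, Real.exp (W j t - D j) := by
      rw [eq_div_iff (hEpos t).ne']
      exact hsum.symm
    rw [hqg i, hgi]
    ring
  -- likelihood equals q
  have hL : ∀ t ∈ Set.Ici (0:ℝ), Lvec (P t) D = q t := by
    intro t ht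
    funext i
    simp only [Lvec, expS, hPdef, Pi.neg_apply]
    have hSne := (hS t).ne'
    have key : ∀ j : Fin c, b * Real.exp (W j t) / S t * Real.exp (-D j)
        = b / S t * Real.exp (W j t - D j) := by
      intro j
      rw [Real.exp_sub, Real.exp_neg]
      field_simp
    rw [key i]
    rw [Finset.sum_congr rfl fun j _ => key j, ← Finset.mul_sum]
    rw [hqL t ht i]
    have hbS : b / S t ≠ 0 := by positivity
    exact mul_div_mul_left _ _ hbS
  -- derivative of P
  have hP' : ∀ t ∈ Set.Ici (0:ℝ),
      HasDerivWithinAt P (Rp (P t) (q t)) (Set.Ici 0) t := by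
    intro t ht
    rw [hasDerivWithinAt_pi]
    intro i
    have hnum : HasDerivWithinAt (fun τ => b * Real.exp (W i τ))
        (b * (Real.exp (W i t) * q t i)) (Set.Ici 0) t :=
      ((hW' i t ht).exp).const_mul b
    have hden : HasDerivWithinAt (fun τ => ∑ j, b * Real.exp (W j τ))
        (∑ j, b * (Real.exp (W j t) * q t j)) (Set.Ici 0) t :=
      HasDerivWithinAt.fun_sum fun j _ => ((hW' j t ht).exp).const_mul b
    have h := hnum.div hden (hS t).ne'
    have hfun : P = fun τ i => b * Real.exp (W i τ) / ∑ j, b * Real.exp (W j τ) := rfl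
    refine h.congr_deriv ?_
    have hSne := (hS t).ne'
    simp only [Rp, hPdef]
    have hsum : (∑ j, b * Real.exp (W j t) / S t * q t j)
        = (∑ j, b * (Real.exp (W j t) * q t j)) / S t := by
      rw [Finset.sum_div]
      refine Finset.sum_congr rfl fun j _ => ?_
      ring
    rw [hsum]
    have hSS : S t = ∑ j, b * Real.exp (W j t) := rfl
    rw [← hSS]
    have haux : ∀ A B qi s : ℝ, s ≠ 0 →
        A / s * qi - B / s * (A / s) = (A * qi * s - A * B) / s ^ 2 := by
      intro A B qi s hs
      field_simp
    rw [haux _ _ _ _ hSne]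
    ring
  constructor
  · show expS (bary c) (∫ τ' in (0:ℝ)..(0:ℝ), q τ') = bary c
    rw [intervalIntegral.integral_same]
    funext i
    simp only [expS, bary, Pi.zero_apply, Real.exp_zero, mul_one, Finset.sum_const,
      Finset.card_univ, Fintype.card_fin, nsmul_eq_mul]
    rw [show (c:ℝ) * (1/(c:ℝ)) = 1 by field_simp, div_one]
  · intro t ht
    rw [hFP t ht, hL t ht]
    exact (hP' t ht).congr (fun τ hτ => hFP τ hτ) (hFP t ht)
end
end

section
/- Let ρ ∈ D_c and let A be a Hermitian c×c matrix. Define G := T_ρ⁻¹[A] − tr(ρA)·ρ. Then G is Hermitian with tr G = 0, and for every X ∈ H_{c,0} one has g_ρ(G, X) = tr(A·X); i.e., G is the Riemannian gradient with respect to the BKM metric of any smooth function on D_c whose Euclidean gradient at ρ equals A. -/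
set_option maxHeartbeats 1000000


/- STATEMENT 5: Let ρ ∈ D_c and let A be a Hermitian c×c matrix. Define
G := T_ρ⁻¹[A] − tr(ρA)·ρ. Then G is Hermitian with tr G = 0, and for every X ∈ H_{c,0}
one has g_ρ(G, X) = tr(A·X), where g_ρ(G,X) = tr(T_ρ[G]·X) is the BKM metric; i.e., G is
the Riemannian gradient w.r.t. the BKM metric of any smooth function on D_c whose
Euclidean gradient at ρ equals A. -/

noncomputable section
open Matrix MeasureTheory
open scoped ComplexOrder

/-- Complex `c × c` matrices. -/
abbrev Mat (c : ℕ) := Matrix (Fin c) (Fin c) ℂ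

/-- `ρ ∈ D_c`: Hermitian positive definite with unit trace. -/
def IsDensity {c : ℕ} (ρ : Mat c) : Prop := ρ.PosDef ∧ ρ.trace = 1

/-- Matrix logarithm of a positive definite Hermitian matrix (functional calculus). -/
def mlog {c : ℕ} (ρ : Mat c) : Mat c := cfc Real.log ρ

/-- Real matrix power `ρ^t` of a positive definite Hermitian matrix (functional calculus). -/
def mpow {c : ℕ} (ρ : Mat c) (t : ℝ) : Mat c := cfc (fun x : ℝ => x ^ t) ρ

/-- The matrix exponential. -/
def mexp {c : ℕ} (X : Mat c) : Mat c := NormedSpace.exp X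

/-- `T_ρ⁻¹[X] = ∫₀¹ ρ^{1−λ} X ρ^λ dλ` (entrywise Bochner integral). -/
def Tinv {c : ℕ} (ρ X : Mat c) : Mat c :=
  Matrix.of fun i j => ∫ l in (0:ℝ)..1, (mpow ρ (1 - l) * X * mpow ρ l) i j

/-- `T_ρ[X] = ∫₀^∞ (ρ+λI)⁻¹ X (ρ+λI)⁻¹ dλ` (entrywise Bochner integral). -/
def Tmap {c : ℕ} (ρ X : Mat c) : Mat c :=
  Matrix.of fun i j =>
    ∫ l in Set.Ioi (0:ℝ), ((ρ + (l:ℂ) • 1)⁻¹ * X * (ρ + (l:ℂ) • 1)⁻¹) i j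

/-- The orthogonal projection `Π_{c,0}[X] = X − (tr X / c)·I` onto traceless matrices. -/
def Pi0 {c : ℕ} (X : Mat c) : Mat c := X - (X.trace / c) • 1

/-- The replicator map `R_ρ[X] = T_ρ⁻¹[X] − tr(ρX)·ρ`. -/
def Rrep {c : ℕ} (ρ X : Mat c) : Mat c := Tinv ρ X - (ρ * X).trace • ρ

/-- The map `Γ(X) = exp_m(X)/tr exp_m(X)`. -/
def Gamma {c : ℕ} (X : Mat c) : Mat c := (mexp X).trace⁻¹ • mexp X

/-- The inverse `Γ⁻¹(ρ) = Π_{c,0}[log_m ρ]`. -/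
def GammaInv {c : ℕ} (ρ : Mat c) : Mat c := Pi0 (mlog ρ)

/-- The likelihood matrix `L_ρ(D) = Γ(Γ⁻¹(ρ) − D)`. -/
def Lmat {c : ℕ} (ρ D : Mat c) : Mat c := Gamma (GammaInv ρ - D)



open intervalIntegral Real

def Kfun (a b : ℝ) : ℝ := if a = b then a else (a - b) / (Real.log a - Real.log b)

def Mfun (a b : ℝ) : ℝ := if a = b then a⁻¹ else (Real.log a - Real.log b) / (a - b)

lemma Kfun_symm (a b : ℝ) : Kfun a b = Kfun b a := by
  unfold Kfun
  rcases eq_or_ne a b with h | h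
  · simp [h]
  · rw [if_neg h, if_neg (Ne.symm h), ← neg_div_neg_eq]
    ring_nf

lemma log_ne (a b : ℝ) (ha : 0 < a) (hb : 0 < b) (h : a ≠ b) :
    Real.log a - Real.log b ≠ 0 := by
  intro hc
  exact h (Real.log_injOn_pos (Set.mem_Ioi.mpr ha) (Set.mem_Ioi.mpr hb) (by linarith))

lemma Kfun_mul_Mfun (a b : ℝ) (ha : 0 < a) (hb : 0 < b) : Mfun a b * Kfun a b = 1 := by
  unfold Kfun Mfun
  rcases eq_or_ne a b with h | h
  · simp [h, inv_mul_cancel₀ hb.ne']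
  · rw [if_neg h, if_neg h]
    field_simp [sub_ne_zero.mpr h, log_ne a b ha hb h]

lemma Kint (a b : ℝ) (ha : 0 < a) (hb : 0 < b) :
    ∫ l in (0:ℝ)..1, a ^ (1 - l) * b ^ l = Kfun a b := by
  have key : ∀ l : ℝ, a ^ (1 - l) * b ^ l = a * Real.exp ((Real.log b - Real.log a) * l) := by
    intro l
    rw [Real.rpow_def_of_pos ha, Real.rpow_def_of_pos hb, ← Real.exp_add]
    nth_rewrite 2 [← Real.exp_log ha]
    rw [← Real.exp_add]
    ring_nf
  simp only [key]
  rw [intervalIntegral.integral_const_mul]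
  rcases eq_or_ne a b with h | h
  · subst h
    simp [Kfun]
  · have hr : Real.log b - Real.log a ≠ 0 := by
      have := log_ne a b ha hb h; intro hc; apply this; linarith
    rw [intervalIntegral.integral_comp_mul_left Real.exp hr]
    rw [integral_exp]
    rw [Kfun, if_neg h]
    rw [mul_zero, Real.exp_zero, mul_one, smul_eq_mul]
    rw [Real.exp_sub, Real.exp_log hb, Real.exp_log ha]
    have hL : Real.log a - Real.log b ≠ 0 := log_ne a b ha hb h
    field_simp
    ring

lemma Mint (a b : ℝ) (ha : 0 < a) (hb : 0 < b) :
    IntegrableOn (fun l => ((a + l) * (b + l))⁻¹) (Set.Ioi (0:ℝ)) ∧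
    ∫ l in Set.Ioi (0:ℝ), ((a + l) * (b + l))⁻¹ = Mfun a b := by
  have hpos : ∀ x : ℝ, x ∈ Set.Ici (0:ℝ) → 0 < (a + x) * (b + x) := fun x hx =>
    mul_pos (by linarith [hx.out]) (by linarith [hx.out])
  have hnonneg : ∀ x ∈ Set.Ioi (0:ℝ), 0 ≤ ((a + x) * (b + x))⁻¹ := fun x hx =>
    inv_nonneg.mpr (hpos x (Set.mem_Ici.mpr (le_of_lt (Set.mem_Ioi.mp hx)))).le
  rcases eq_or_ne a b with h | h
  · subst h
    have hderiv : ∀ x ∈ Set.Ici (0:ℝ), HasDerivAt (fun l => -((a + l)⁻¹))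
        (((a + x) * (a + x))⁻¹) x := by
      intro x hx
      have hax : a + x ≠ 0 := by have := hx.out; positivity
      have h1 : HasDerivAt (fun l : ℝ => a + l) 1 x := (hasDerivAt_id x).const_add a
      have := (h1.inv hax).neg
      refine this.congr_deriv ?_
      field_simp
    have htend : Filter.Tendsto (fun l : ℝ => -((a + l)⁻¹)) Filter.atTop (nhds 0) := by
      have : Filter.Tendsto (fun l : ℝ => a + l) Filter.atTop Filter.atTop :=
        Filter.tendsto_atTop_add_const_left _ a Filter.tendsto_id
      simpa using (Filter.Tendsto.inv_tendsto_atTop this).neg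
    constructor
    · exact integrableOn_Ioi_deriv_of_nonneg' hderiv hnonneg htend
    · rw [integral_Ioi_of_hasDerivAt_of_nonneg' hderiv hnonneg htend]
      simp [Mfun]
  · have hderiv : ∀ x ∈ Set.Ici (0:ℝ), HasDerivAt
        (fun l => Real.log ((a + l) / (b + l)) / (b - a)) (((a + x) * (b + x))⁻¹) x := by
      intro x hx
      have hax : (0:ℝ) < a + x := by have := hx.out; linarith
      have hbx : (0:ℝ) < b + x := by have := hx.out; linarith
      have h1 : HasDerivAt (fun l : ℝ => a + l) 1 x := (hasDerivAt_id x).const_add a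
      have h2 : HasDerivAt (fun l : ℝ => b + l) 1 x := (hasDerivAt_id x).const_add b
      have hq := h1.div h2 hbx.ne'
      have hq2 := (hq.log (div_ne_zero hax.ne' hbx.ne')).div_const (b - a)
      refine hq2.congr_deriv ?_
      have hba : b - a ≠ 0 := sub_ne_zero.mpr (Ne.symm h)
      rw [Pi.div_apply]
      field_simp
      ring
    have htend : Filter.Tendsto (fun l : ℝ => Real.log ((a + l) / (b + l)) / (b - a))
        Filter.atTop (nhds 0) := by
      have hb' : Filter.Tendsto (fun l : ℝ => b + l) Filter.atTop Filter.atTop :=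
        Filter.tendsto_atTop_add_const_left _ b Filter.tendsto_id
      have h0 : Filter.Tendsto (fun l : ℝ => (a - b) / (b + l)) Filter.atTop (nhds 0) :=
        Filter.Tendsto.div_atTop tendsto_const_nhds hb'
      have h1 : Filter.Tendsto (fun l : ℝ => (a + l) / (b + l)) Filter.atTop (nhds 1) := by
        have h2 : Filter.Tendsto (fun l : ℝ => 1 + (a - b) / (b + l)) Filter.atTop (nhds 1) := by
          simpa using tendsto_const_nhds.add h0
        apply h2.congr'
        filter_upwards [Filter.eventually_gt_atTop (0:ℝ)] with l hl
        have : b + l ≠ 0 := by positivity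
        field_simp
        ring
      have h3 := ((Real.continuousAt_log one_ne_zero).tendsto.comp h1)
      rw [Real.log_one] at h3
      simpa using h3.div_const (b - a)
    constructor
    · exact integrableOn_Ioi_deriv_of_nonneg' hderiv hnonneg htend
    · rw [integral_Ioi_of_hasDerivAt_of_nonneg' hderiv hnonneg htend]
      rw [Mfun, if_neg h]
      rw [add_zero, add_zero, Real.log_div ha.ne' hb.ne']
      rw [zero_sub, ← neg_div, neg_sub]
      rw [← neg_div_neg_eq]
      ring_nf

lemma isum' {c : ℕ} (G : Fin c → ℝ → ℂ) (μ : Measure ℝ)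
    (hG : ∀ p, Integrable (G p) μ) :
    Integrable (fun l => ∑ p, G p l) μ := by
  have := MeasureTheory.integrable_finset_sum (μ := μ) (f := G) Finset.univ (fun p _ => hG p)
  simpa using this

lemma double_swap' {c : ℕ} (F : Fin c → Fin c → ℝ → ℂ) (μ : Measure ℝ)
    (hF : ∀ p q, Integrable (F p q) μ) :
    ∫ l, ∑ q, ∑ p, F p q l ∂μ = ∑ q, ∑ p, ∫ l, F p q l ∂μ := by
  rw [MeasureTheory.integral_finset_sum (f := fun q l => ∑ p, F p q l)
    (μ := μ) Finset.univ (fun q _ => isum' _ _ (fun p => hF p q))]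
  exact Finset.sum_congr rfl fun q _ =>
    MeasureTheory.integral_finset_sum Finset.univ (fun p _ => hF p q)

lemma rpow_ker (a b : ℝ) (ha : 0 < a) (hb : 0 < b) (l : ℝ) :
    a ^ (1 - l) * b ^ l = a * Real.exp ((Real.log b - Real.log a) * l) := by
  rw [Real.rpow_def_of_pos ha, Real.rpow_def_of_pos hb, ← Real.exp_add]
  nth_rewrite 2 [← Real.exp_log ha]
  rw [← Real.exp_add]
  ring_nf

lemma contKer (a b : ℝ) (ha : 0 < a) (hb : 0 < b) :
    Continuous (fun l : ℝ => a ^ (1 - l) * b ^ l) := by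
  have key : (fun l : ℝ => a ^ (1 - l) * b ^ l)
      = fun l => a * Real.exp ((Real.log b - Real.log a) * l) :=
    funext (rpow_ker a b ha hb)
  rw [key]; fun_prop

section Struct
variable {c : ℕ} {ρ : Mat c} (hH : ρ.IsHermitian)

local notation "V" => (Matrix.IsHermitian.eigenvectorUnitary hH : Mat c)
local notation "d" => hH.eigenvalues

lemma hV1 : V * star V = 1 := by
  simpa using (Matrix.mem_unitaryGroup_iff).mp (hH.eigenvectorUnitary).2

lemma hV2 : star V * V = 1 := by
  simpa using (Matrix.mem_unitaryGroup_iff').mp (hH.eigenvectorUnitary).2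

lemma mpow_eq (t : ℝ) :
    mpow ρ t = V * Matrix.diagonal (fun i => ((d i ^ t : ℝ) : ℂ)) * star V := by
  rw [mpow, hH.cfc_eq, Matrix.IsHermitian.cfc]
  rfl

lemma spec : ρ = V * Matrix.diagonal (fun i => ((d i : ℝ) : ℂ)) * star V := by
  have := hH.spectral_theorem
  rw [Unitary.conjStarAlgAut_apply] at this
  exact this

lemma conj_entry (M : Mat c) (i j : Fin c) :
    (V * M * star V) i j = ∑ q, ∑ p, (V) i p * M p q * (star V) q j := by
  simp [Matrix.mul_apply, Finset.sum_mul]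

lemma sandwich (f g : Fin c → ℂ) (X : Mat c) :
    (V * Matrix.diagonal f * star V) * X * (V * Matrix.diagonal g * star V)
      = V * (Matrix.of fun p q => f p * ((star V * X * V) p q) * g q) * star V := by
  have h : Matrix.diagonal f * (star V * X * V) * Matrix.diagonal g
      = Matrix.of fun p q => f p * ((star V * X * V) p q) * g q := by
    ext p q
    rw [Matrix.mul_diagonal, Matrix.diagonal_mul]
    rfl
  rw [← h]
  simp only [Matrix.mul_assoc]

lemma sum_fun_eq {c : ℕ} (G : Fin c → ℝ → ℂ) :
    (∑ p, G p) = fun l => ∑ p, G p l := by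
  funext l; simp

lemma ii_sum {c : ℕ} (G : Fin c → ℝ → ℂ)
    (hG : ∀ p, IntervalIntegrable (G p) MeasureTheory.volume 0 1) :
    IntervalIntegrable (fun l => ∑ p, G p l) MeasureTheory.volume 0 1 := by
  rw [← sum_fun_eq]
  exact IntervalIntegrable.sum Finset.univ (fun p _ => hG p)

lemma double_swap {c : ℕ} (F : Fin c → Fin c → ℝ → ℂ)
    (hF : ∀ p q, IntervalIntegrable (F p q) MeasureTheory.volume 0 1) :
    ∫ l in (0:ℝ)..1, ∑ q, ∑ p, F p q l = ∑ q, ∑ p, ∫ l in (0:ℝ)..1, F p q l := by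
  rw [intervalIntegral.integral_finset_sum (f := fun q l => ∑ p, F p q l)
    (fun q _ => ii_sum _ (fun p => hF p q))]
  exact Finset.sum_congr rfl fun q _ => intervalIntegral.integral_finset_sum (fun p _ => hF p q)

lemma Tinv_eq (hd : ∀ i, 0 < d i) (X : Mat c) :
    Tinv ρ X = V * (Matrix.of fun p q =>
      (Kfun (d p) (d q) : ℂ) * ((star V * X * V) p q)) * star V := by
  ext i j
  have hint : ∀ l : ℝ, (mpow ρ (1 - l) * X * mpow ρ l) i j
      = ∑ q, ∑ p, ((V) i p * ((star V * X * V) p q) * (star V) q j)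
          * (((d p) ^ (1 - l) * (d q) ^ l : ℝ) : ℂ) := by
    intro l
    rw [mpow_eq hH, mpow_eq hH, sandwich hH, conj_entry hH]
    refine Finset.sum_congr rfl fun q _ => Finset.sum_congr rfl fun p _ => ?_
    simp only [Matrix.of_apply]
    push_cast
    ring
  show (∫ l in (0:ℝ)..1, (mpow ρ (1 - l) * X * mpow ρ l) i j) = _
  simp only [hint]
  have hIG : ∀ p q : Fin c, IntervalIntegrable (fun l : ℝ =>
      ((V) i p * ((star V * X * V) p q) * (star V) q j)
        * (((d p) ^ (1 - l) * (d q) ^ l : ℝ) : ℂ)) volume 0 1 :=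
    fun p q => (continuous_const.mul (Complex.continuous_ofReal.comp
      (contKer _ _ (hd p) (hd q)))).intervalIntegrable _ _
  rw [double_swap (fun p q l => ((V) i p * ((star V * X * V) p q) * (star V) q j)
          * (((d p) ^ (1 - l) * (d q) ^ l : ℝ) : ℂ)) hIG]
  rw [conj_entry hH]
  refine Finset.sum_congr rfl fun q _ => ?_
  refine Finset.sum_congr rfl fun p _ => ?_
  rw [intervalIntegral.integral_const_mul, intervalIntegral.integral_ofReal,
    Kint _ _ (hd p) (hd q)]
  simp only [Matrix.of_apply]
  ring

lemma resolvent2 (hd : ∀ i, 0 < d i) (l : ℝ) (hl : 0 < l) :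
    (ρ + (l:ℂ) • 1)⁻¹
      = V * Matrix.diagonal (fun i => (((d i + l)⁻¹ : ℝ) : ℂ)) * star V := by
  have h1 : ρ + (l:ℂ) • 1 = V * Matrix.diagonal (fun i => ((d i : ℝ) : ℂ) + (l:ℂ)) * star V := by
    have h2 : (l:ℂ) • (1 : Mat c) = V * ((l:ℂ) • (1 : Mat c)) * star V := by
      rw [Matrix.mul_smul, Matrix.smul_mul, Matrix.mul_one, hV1 hH]
    have h3 : Matrix.diagonal (fun i => ((d i : ℝ) : ℂ)) + (l:ℂ) • (1 : Mat c)
        = Matrix.diagonal (fun i => ((d i : ℝ) : ℂ) + (l:ℂ)) := by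
      ext p q
      by_cases h : p = q <;>
        simp [Matrix.diagonal_apply, Matrix.one_apply, h]
    conv_lhs => rw [spec hH, h2]
    rw [← Matrix.add_mul, ← Matrix.mul_add, h3]
  rw [h1]
  apply Matrix.inv_eq_right_inv
  calc (V * Matrix.diagonal (fun i => ((d i : ℝ) : ℂ) + (l:ℂ)) * star V) *
        (V * Matrix.diagonal (fun i => (((d i + l)⁻¹ : ℝ) : ℂ)) * star V)
      = V * (Matrix.diagonal (fun i => ((d i : ℝ) : ℂ) + (l:ℂ)) * ((star V * V) *
          Matrix.diagonal (fun i => (((d i + l)⁻¹ : ℝ) : ℂ)))) * star V := by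
        simp only [Matrix.mul_assoc]
    _ = V * star V := by
        rw [hV2 hH, Matrix.one_mul, Matrix.diagonal_mul_diagonal]
        have : (fun i => (((d i : ℝ) : ℂ) + (l:ℂ)) * (((d i + l)⁻¹ : ℝ) : ℂ))
            = fun _ => (1 : ℂ) := by
          funext i
          push_cast
          apply mul_inv_cancel₀
          have : (0:ℝ) < d i + l := by have := hd i; linarith
          exact_mod_cast (Complex.ofReal_ne_zero.mpr this.ne')
        rw [this, Matrix.diagonal_one, Matrix.mul_one]
    _ = 1 := hV1 hH

lemma Tmap_eq (hd : ∀ i, 0 < d i) (Z : Mat c) :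
    Tmap ρ Z = V * (Matrix.of fun p q =>
      (Mfun (d p) (d q) : ℂ) * ((star V * Z * V) p q)) * star V := by
  ext i j
  show (∫ l in Set.Ioi (0:ℝ), ((ρ + (l:ℂ) • 1)⁻¹ * Z * (ρ + (l:ℂ) • 1)⁻¹) i j) = _
  rw [MeasureTheory.setIntegral_congr_fun measurableSet_Ioi
    (g := fun l => ∑ q, ∑ p, ((V) i p * ((star V * Z * V) p q) * (star V) q j)
      * (((((d p) + l) * ((d q) + l))⁻¹ : ℝ) : ℂ))
    (fun l hl => by
      rw [resolvent2 hH hd l hl, sandwich hH, conj_entry hH]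
      refine Finset.sum_congr rfl fun q _ => Finset.sum_congr rfl fun p _ => ?_
      simp only [Matrix.of_apply]
      rw [mul_inv]
      push_cast
      ring)]
  have hIG : ∀ p q : Fin c, Integrable (fun l : ℝ =>
      ((V) i p * ((star V * Z * V) p q) * (star V) q j)
        * (((((d p) + l) * ((d q) + l))⁻¹ : ℝ) : ℂ))
      (MeasureTheory.volume.restrict (Set.Ioi (0:ℝ))) :=
    fun p q => ((Mint _ _ (hd p) (hd q)).1.ofReal).const_mul _
  rw [double_swap' _ _ hIG]
  rw [conj_entry hH]
  refine Finset.sum_congr rfl fun q _ => ?_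
  refine Finset.sum_congr rfl fun p _ => ?_
  rw [MeasureTheory.integral_const_mul]
  have hval : (∫ l in Set.Ioi (0:ℝ), ((((d p + l) * (d q + l))⁻¹ : ℝ) : ℂ))
      = ((Mfun (d p) (d q) : ℝ) : ℂ) := by
    rw [← (Mint _ _ (hd p) (hd q)).2]
    exact _root_.integral_ofReal
  rw [hval]
  simp only [Matrix.of_apply]
  ring

end Struct


theorem stmt5 {c : ℕ} (hc : 2 ≤ c) (ρ A : Mat c) (hρ : IsDensity ρ)
    (hA : A.IsHermitian) :
    (Tinv ρ A - (ρ * A).trace • ρ).IsHermitian ∧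
    (Tinv ρ A - (ρ * A).trace • ρ).trace = 0 ∧
    ∀ X : Mat c, X.IsHermitian → X.trace = 0 →
      (Tmap ρ (Tinv ρ A - (ρ * A).trace • ρ) * X).trace = (A * X).trace := by
  obtain ⟨hPD, htr⟩ := hρ
  have hH : ρ.IsHermitian := hPD.1
  have hd : ∀ i, 0 < hH.eigenvalues i := fun i => hPD.eigenvalues_pos i
  set V : Mat c := (Matrix.IsHermitian.eigenvectorUnitary hH : Mat c) with hVdef
  set dd : Fin c → ℝ := hH.eigenvalues with hddef
  set Ahat : Mat c := star V * A * V with hAhatdef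
  have hAhatH : Ahat.IsHermitian := by
    rw [hAhatdef, Matrix.IsHermitian]
    rw [Matrix.conjTranspose_mul, Matrix.conjTranspose_mul, ← Matrix.star_eq_conjTranspose V,
      ← Matrix.star_eq_conjTranspose (star V), star_star, hA.eq, Matrix.mul_assoc]
  set N : Mat c := Matrix.of (fun p q => (Kfun (dd p) (dd q) : ℂ) * Ahat p q) with hNdef
  have hNH : N.IsHermitian := by
    rw [Matrix.IsHermitian]
    ext p q
    rw [Matrix.conjTranspose_apply, hNdef]
    simp only [Matrix.of_apply, star_mul']
    rw [show star ((Kfun (dd q) (dd p) : ℝ) : ℂ) = ((Kfun (dd q) (dd p) : ℝ) : ℂ) from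
      Complex.conj_ofReal _, Kfun_symm (dd q) (dd p), hAhatH.apply p q]
  have hTinv : Tinv ρ A = V * N * star V := Tinv_eq hH hd A
  set Dg : Mat c := Matrix.diagonal (fun i => ((dd i : ℝ) : ℂ)) with hDgdef
  set s : ℂ := (ρ * A).trace with hsdef
  have hsandA : V * Ahat * star V = A := by
    calc V * (star V * A * V) * star V = (V * star V) * A * (V * star V) := by
          simp only [Matrix.mul_assoc]
      _ = A := by rw [hV1 hH]; simp
  have hs : s = ∑ i, (dd i : ℂ) * Ahat i i := by
    have h0 : ρ * A = V * (Dg * (star V * A)) := by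
      conv_lhs => rw [spec hH]
      simp only [Matrix.mul_assoc]
      rfl
    have h1 : Dg * (star V * A) * V = Dg * Ahat := by
      rw [hAhatdef]
      simp only [Matrix.mul_assoc]
    rw [hsdef, h0, Matrix.trace_mul_comm, h1]
    simp [Matrix.trace, Matrix.diag, Matrix.mul_apply, Matrix.diagonal_apply, Dg,
      ite_mul, zero_mul]
  have hsStar : star s = s := by
    rw [hs, star_sum]
    refine Finset.sum_congr rfl fun i _ => ?_
    rw [star_mul']
    rw [show star ((dd i : ℝ) : ℂ) = ((dd i : ℝ) : ℂ) from Complex.conj_ofReal _]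
    congr 1
    exact hAhatH.apply i i
  have hρEq : star V * ρ * V = Dg := by
    conv_lhs => rw [spec hH]
    calc star V * (V * Dg * star V) * V = (star V * V) * Dg * (star V * V) := by
          simp only [Matrix.mul_assoc]
      _ = Dg := by rw [hV2 hH]; simp
  -- Part 1: Hermitian
  have hTinvH : (Tinv ρ A).IsHermitian := by
    rw [hTinv, Matrix.IsHermitian, Matrix.conjTranspose_mul, Matrix.conjTranspose_mul,
      ← Matrix.star_eq_conjTranspose V, ← Matrix.star_eq_conjTranspose (star V), star_star,
      hNH.eq, Matrix.mul_assoc]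
  have hsρH : (s • ρ).IsHermitian := by
    rw [Matrix.IsHermitian, Matrix.conjTranspose_smul, hH.eq, hsStar]
  have part1 : (Tinv ρ A - s • ρ).IsHermitian := hTinvH.sub hsρH
  -- Part 2: trace
  have htrN : N.trace = s := by
    rw [hs, Matrix.trace]
    refine Finset.sum_congr rfl fun i _ => ?_
    rw [Matrix.diag]
    rw [hNdef]
    simp only [Matrix.of_apply]
    rw [Kfun, if_pos rfl]
  have part2 : (Tinv ρ A - s • ρ).trace = 0 := by
    rw [Matrix.trace_sub, Matrix.trace_smul, htr, hTinv]
    rw [Matrix.trace_mul_cycle, hV2 hH, Matrix.one_mul, htrN]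
    simp
  -- Part 3
  have hG2 : star V * (Tinv ρ A - s • ρ) * V = N - s • Dg := by
    rw [Matrix.mul_sub, Matrix.sub_mul, Matrix.mul_smul, Matrix.smul_mul, hρEq, hTinv]
    congr 1
    calc star V * (V * N * star V) * V = (star V * V) * N * (star V * V) := by
          simp only [Matrix.mul_assoc]
      _ = N := by rw [hV2 hH]; simp
  have hMN : (Matrix.of fun p q => (Mfun (dd p) (dd q) : ℂ) * ((N - s • Dg) p q))
      = Ahat - s • 1 := by
    ext p q
    simp only [Matrix.of_apply, Matrix.sub_apply, Matrix.smul_apply, hNdef, hDgdef,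
      Matrix.diagonal_apply, Matrix.one_apply]
    by_cases h : p = q
    · subst h
      rw [if_pos rfl, if_pos rfl]
      have h1 : (Mfun (dd p) (dd p) : ℂ) * (Kfun (dd p) (dd p) : ℂ) = 1 := by
        rw [← Complex.ofReal_mul, Kfun_mul_Mfun _ _ (hd p) (hd p), Complex.ofReal_one]
      have h2 : (Mfun (dd p) (dd p) : ℂ) * ((dd p : ℝ) : ℂ) = 1 := by
        rw [← Complex.ofReal_mul, Mfun, if_pos rfl, inv_mul_cancel₀ (hd p).ne',
          Complex.ofReal_one]
      calc (Mfun (dd p) (dd p) : ℂ) * ((Kfun (dd p) (dd p) : ℂ) * Ahat p p - s • ((dd p : ℝ) : ℂ))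
          = ((Mfun (dd p) (dd p) : ℂ) * (Kfun (dd p) (dd p) : ℂ)) * Ahat p p
            - s * ((Mfun (dd p) (dd p) : ℂ) * ((dd p : ℝ) : ℂ)) := by
            rw [smul_eq_mul]; ring
        _ = Ahat p p - s • (1:ℂ) := by rw [h1, h2, one_mul, smul_eq_mul, mul_one]
    · rw [if_neg h, if_neg h]
      have h1 : (Mfun (dd p) (dd q) : ℂ) * (Kfun (dd p) (dd q) : ℂ) = 1 := by
        rw [← Complex.ofReal_mul, Kfun_mul_Mfun _ _ (hd p) (hd q), Complex.ofReal_one]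
      simp only [smul_eq_mul, mul_zero, sub_zero]
      rw [← mul_assoc, h1, one_mul]
  have hTmapG : Tmap ρ (Tinv ρ A - s • ρ) = A - s • 1 := by
    rw [Tmap_eq hH hd]
    rw [show (Matrix.of fun p q => (Mfun (dd p) (dd q) : ℂ)
        * ((star V * (Tinv ρ A - s • ρ) * V) p q)) = Ahat - s • 1 by rw [hG2]; exact hMN]
    rw [Matrix.mul_sub, Matrix.sub_mul, hsandA, Matrix.mul_smul, Matrix.smul_mul,
      Matrix.mul_one, hV1 hH]
  refine ⟨part1, part2, fun X hX hXtr => ?_⟩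
  rw [hTmapG, Matrix.sub_mul, Matrix.trace_sub, Matrix.smul_mul, Matrix.one_mul,
    Matrix.trace_smul, hXtr, smul_zero, sub_zero]
end
end

section
/- For every ρ ∈ D_c and every X ∈ H_{c,0}, the map exp_ρ(X) := Exp_ρ^{(e)}(R_ρ[X]) has the explicit form exp_ρ(X) = Γ(Γ⁻¹(ρ) + X); that is, Γ(Γ⁻¹(ρ) + Π_{c,0}[T_ρ[R_ρ[X]]]) = Γ(Γ⁻¹(ρ) + X). -/
/- STATEMENT 10: For every ρ ∈ D_c and every X ∈ H_{c,0}, the map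
exp_ρ(X) := Exp_ρ^{(e)}(R_ρ[X]) has the explicit form exp_ρ(X) = Γ(Γ⁻¹(ρ) + X); that is,
Γ(Γ⁻¹(ρ) + Π_{c,0}[T_ρ[R_ρ[X]]]) = Γ(Γ⁻¹(ρ) + X). -/

noncomputable section
open Matrix MeasureTheory
open scoped ComplexOrder

/-! ### Scalar integral lemmas -/

section Scalar
open Set Filter
open scoped Topology

lemma G_self {a : ℝ} (ha : 0 < a) :
    ∫ x in Set.Ioi (0:ℝ), ((a + x) * (a + x))⁻¹ = a⁻¹ := by
  have key : ∫ x in Set.Ioi (0:ℝ), ((a + x) * (a + x))⁻¹ = 0 - (-(a + 0)⁻¹) := by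
    apply integral_Ioi_of_hasDerivAt_of_nonneg (g := fun x => -(a + x)⁻¹)
    · exact ((((continuous_const.add continuous_id).continuousAt).inv₀
        (by simpa using ha.ne')).neg).continuousWithinAt
    · intro x hx
      have hx0 : (0:ℝ) < x := hx
      have hax : a + x ≠ 0 := by positivity
      have : HasDerivAt (fun x : ℝ => a + x) 1 x := (hasDerivAt_id x).const_add a
      have h2 := (this.inv hax).neg
      refine h2.congr_deriv ?_
      field_simp
    · intro x hx
      have : (0:ℝ) < a + x := by have := hx.out; positivity
      positivity
    · have h1 : Tendsto (fun x : ℝ => a + x) atTop atTop := tendsto_atTop_add_const_left _ _ tendsto_id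
      have := (tendsto_inv_atTop_zero.comp h1).neg
      simpa using this
  simpa using key

lemma G_self_integrable {a : ℝ} (ha : 0 < a) :
    IntegrableOn (fun x : ℝ => ((a + x) * (a + x))⁻¹) (Set.Ioi 0) := by
  apply integrableOn_Ioi_deriv_of_nonneg (g := fun x => -(a + x)⁻¹) (l := 0)
  · exact ((((continuous_const.add continuous_id).continuousAt).inv₀
      (by simpa using ha.ne')).neg).continuousWithinAt
  · intro x hx
    have hx0 : (0:ℝ) < x := hx
    have hax : a + x ≠ 0 := by positivity
    have : HasDerivAt (fun x : ℝ => a + x) 1 x := (hasDerivAt_id x).const_add a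
    have h2 := (this.inv hax).neg
    refine h2.congr_deriv ?_
    field_simp
  · intro x hx
    have : (0:ℝ) < a + x := by have := hx.out; positivity
    positivity
  · have h1 : Tendsto (fun x : ℝ => a + x) atTop atTop := tendsto_atTop_add_const_left _ _ tendsto_id
    have := (tendsto_inv_atTop_zero.comp h1).neg
    simpa using this

lemma G_integrable {a b : ℝ} (ha : 0 < a) (hb : 0 < b) :
    IntegrableOn (fun x : ℝ => ((a + x) * (b + x))⁻¹) (Set.Ioi 0) := by
  set m := min a b with hm
  have hm0 : 0 < m := lt_min ha hb
  apply Integrable.mono (G_self_integrable hm0)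
  · apply Measurable.aestronglyMeasurable
    exact ((measurable_const.add measurable_id).mul (measurable_const.add measurable_id)).inv
  · filter_upwards [ae_restrict_mem measurableSet_Ioi] with x hx
    have hx0 : (0:ℝ) < x := hx
    have h1 : (0:ℝ) < m + x := by positivity
    have h2 : (0:ℝ) < a + x := by positivity
    have h3 : (0:ℝ) < b + x := by positivity
    rw [Real.norm_eq_abs, Real.norm_eq_abs, abs_of_pos (by positivity),
      abs_of_pos (by positivity)]
    apply inv_anti₀ (by positivity)
    have hma : m ≤ a := min_le_left a b
    have hmb : m ≤ b := min_le_right a b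
    nlinarith

lemma G_ne {a b : ℝ} (ha : 0 < a) (hb : 0 < b) (hab : a ≠ b) :
    ∫ x in Set.Ioi (0:ℝ), ((a + x) * (b + x))⁻¹ = (Real.log a - Real.log b) / (a - b) := by
  have hab' : a - b ≠ 0 := sub_ne_zero.mpr hab
  have key : ∫ x in Set.Ioi (0:ℝ), ((a + x) * (b + x))⁻¹
      = 0 - (a - b)⁻¹ * (Real.log (b + 0) - Real.log (a + 0)) := by
    apply integral_Ioi_of_hasDerivAt_of_nonneg
      (g := fun x => (a - b)⁻¹ * (Real.log (b + x) - Real.log (a + x)))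
    · apply ContinuousAt.continuousWithinAt
      have hca : ContinuousAt (fun x : ℝ => Real.log (a + x)) 0 :=
        (Real.continuousAt_log (by simpa using ha.ne')).comp
          ((continuous_const.add continuous_id).continuousAt)
      have hcb : ContinuousAt (fun x : ℝ => Real.log (b + x)) 0 :=
        (Real.continuousAt_log (by simpa using hb.ne')).comp
          ((continuous_const.add continuous_id).continuousAt)
      exact (hcb.sub hca).const_mul _
    · intro x hx
      have hx0 : (0:ℝ) < x := hx
      have hax : a + x ≠ 0 := by positivity
      have hbx : b + x ≠ 0 := by positivity
      have hda : HasDerivAt (fun x : ℝ => Real.log (a + x)) (a + x)⁻¹ x := by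
        have : HasDerivAt (fun x : ℝ => a + x) 1 x := (hasDerivAt_id x).const_add a
        exact ((Real.hasDerivAt_log hax).comp x this).congr_deriv (by simp)
      have hdb : HasDerivAt (fun x : ℝ => Real.log (b + x)) (b + x)⁻¹ x := by
        have : HasDerivAt (fun x : ℝ => b + x) 1 x := (hasDerivAt_id x).const_add b
        exact ((Real.hasDerivAt_log hbx).comp x this).congr_deriv (by simp)
      have := ((hdb.sub hda).const_mul ((a - b)⁻¹))
      refine this.congr_deriv ?_
      field_simp
      ring
    · intro x hx
      have hx0 : (0:ℝ) < x := hx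
      have : (0:ℝ) < (a + x) * (b + x) := by positivity
      positivity
    · have h1 : Tendsto (fun x : ℝ => 1 + (b - a) / (a + x)) atTop (𝓝 1) := by
        have := Tendsto.div_atTop (tendsto_const_nhds (x := b - a))
          (tendsto_atTop_add_const_left _ a tendsto_id)
        simpa using (tendsto_const_nhds (x := (1:ℝ))).add this
      have h2 : Tendsto (fun x : ℝ => Real.log (b + x) - Real.log (a + x)) atTop (𝓝 0) := by
        have hcont := (Real.continuousAt_log (one_ne_zero)).tendsto
        have h3 := hcont.comp h1
        rw [Real.log_one] at h3
        apply h3.congr'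
        filter_upwards [Filter.eventually_gt_atTop (0:ℝ)] with x hx
        have hax : (0:ℝ) < a + x := by positivity
        have hbx : (0:ℝ) < b + x := by positivity
        have : 1 + (b - a) / (a + x) = (b + x) / (a + x) := by field_simp; ring
        simp only [Function.comp_apply, this]
        rw [Real.log_div hbx.ne' hax.ne']
      have := h2.const_mul ((a - b)⁻¹)
      simpa using this
  rw [key]
  field_simp
  simp only [add_zero]
  ring

lemma F_eq {a b : ℝ} (ha : 0 < a) (hb : 0 < b) :
    ∫ l in (0:ℝ)..1, a ^ (1 - l) * b ^ l
      = a * ∫ l in (0:ℝ)..1, Real.exp ((Real.log b - Real.log a) * l) := by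
  rw [← intervalIntegral.integral_const_mul]
  apply intervalIntegral.integral_congr
  intro l _
  show a ^ (1 - l) * b ^ l = a * Real.exp ((Real.log b - Real.log a) * l)
  rw [Real.rpow_def_of_pos ha, Real.rpow_def_of_pos hb, ← Real.exp_add,
    show a * Real.exp ((Real.log b - Real.log a) * l)
        = Real.exp (Real.log a + (Real.log b - Real.log a) * l) by
      rw [Real.exp_add, Real.exp_log ha]]
  congr 1
  ring

lemma exp_mul_integral {c : ℝ} (hc : c ≠ 0) :
    ∫ l in (0:ℝ)..1, Real.exp (c * l) = (Real.exp c - 1) / c := by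
  have : ∀ l ∈ Set.uIcc (0:ℝ) 1, HasDerivAt (fun l => Real.exp (c * l) / c) (Real.exp (c * l)) l := by
    intro l _
    have h1 : HasDerivAt (fun l : ℝ => c * l) c l := by simpa using (hasDerivAt_id l).const_mul c
    have h2 := (h1.exp).div_const c
    refine h2.congr_deriv ?_
    field_simp
  rw [intervalIntegral.integral_eq_sub_of_hasDerivAt this
    ((Real.continuous_exp.comp (continuous_const.mul continuous_id)).intervalIntegrable _ _)]
  simp [sub_div]

/-- Main scalar identity: `F(a,b) * G(a,b) = 1`. -/
lemma FG_one {a b : ℝ} (ha : 0 < a) (hb : 0 < b) :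
    (∫ l in (0:ℝ)..1, a ^ (1 - l) * b ^ l) *
      (∫ x in Set.Ioi (0:ℝ), ((a + x) * (b + x))⁻¹) = 1 := by
  rcases eq_or_ne a b with rfl | hab
  · rw [G_self ha, F_eq ha ha]
    simp [ha.ne']
  · have hlog : Real.log a ≠ Real.log b := fun h =>
      hab (Real.log_injOn_pos (Set.mem_Ioi.mpr ha) (Set.mem_Ioi.mpr hb) h)
    have hc : Real.log b - Real.log a ≠ 0 := sub_ne_zero.mpr (Ne.symm hlog)
    rw [G_ne ha hb hab, F_eq ha hb, exp_mul_integral hc]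
    rw [Real.exp_sub, Real.exp_log ha, Real.exp_log hb]
    have hab' : a - b ≠ 0 := sub_ne_zero.mpr hab
    field_simp
    ring

end Scalar

/-! ### The main theorem -/

theorem stmt10 {c : ℕ} (hc : 2 ≤ c) (ρ X : Mat c) (hρ : IsDensity ρ)
    (hX : X.IsHermitian) (hXtr : X.trace = 0) :
    Gamma (GammaInv ρ + Pi0 (Tmap ρ (Rrep ρ X))) = Gamma (GammaInv ρ + X) := by
  obtain ⟨hpd, -⟩ := hρ
  have hH : ρ.IsHermitian := hpd.1
  set U : Mat c := (hH.eigenvectorUnitary : Mat c) with hUdef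
  set d : Fin c → ℝ := hH.eigenvalues with hddef
  have hdpos : ∀ i, 0 < d i := fun i => hpd.eigenvalues_pos i
  have hU1 : U * star U = 1 := Matrix.mem_unitaryGroup_iff.mp hH.eigenvectorUnitary.2
  have hU2 : star U * U = 1 := Matrix.mem_unitaryGroup_iff'.mp hH.eigenvectorUnitary.2
  have conjmul : ∀ A B : Mat c, (U * A * star U) * (U * B * star U) = U * (A * B) * star U := by
    intro A B
    calc (U * A * star U) * (U * B * star U)
        = U * (A * ((star U * U) * (B * star U))) := by simp only [mul_assoc]
      _ = U * (A * B) * star U := by rw [hU2, one_mul]; simp only [mul_assoc]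
  have entry : ∀ (M : Mat c) (i j : Fin c),
      (U * M * star U) i j = ∑ m, ∑ k, U i k * M k m * (star U) m j := by
    intro M i j
    simp only [Matrix.mul_apply, Finset.sum_mul]
  set Y : Mat c := star U * X * U with hYdef
  have hXY : X = U * Y * star U := by
    have h : U * (star U * X * U) * star U = (U * star U) * X * (U * star U) := by
      simp only [mul_assoc]
    rw [hYdef, h, hU1, one_mul, mul_one]
  set F : Fin c → Fin c → ℂ :=
    fun k m => ((∫ l in (0:ℝ)..1, d k ^ (1 - l) * d m ^ l : ℝ) : ℂ) with hFdef
  set G : Fin c → Fin c → ℂ :=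
    fun k m => ((∫ x in Set.Ioi (0:ℝ), ((d k + x) * (d m + x))⁻¹ : ℝ) : ℂ) with hGdef
  have mpow_eq : ∀ t : ℝ,
      mpow ρ t = U * Matrix.diagonal (fun i => ((d i ^ t : ℝ) : ℂ)) * star U := by
    intro t
    rw [mpow, hH.cfc_eq]
    rfl
  have contRpow : ∀ a : ℝ, 0 < a → Continuous fun l : ℝ => a ^ l := by
    intro a ha
    have : (fun l : ℝ => a ^ l) = fun l => Real.exp (Real.log a * l) := by
      funext l
      rw [Real.rpow_def_of_pos ha]
    rw [this]
    exact Real.continuous_exp.comp (continuous_const.mul continuous_id)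
  have cont1 : ∀ k m : Fin c, Continuous fun l : ℝ => ((d k ^ (1 - l) * d m ^ l : ℝ) : ℂ) := by
    intro k m
    apply Complex.continuous_ofReal.comp
    exact ((contRpow _ (hdpos k)).comp (continuous_const.sub continuous_id)).mul
      (contRpow _ (hdpos m))
  -- Step B : `Tinv`
  have hTinv : Tinv ρ X = U * (Matrix.of fun k m => Y k m * F k m) * star U := by
    ext i j
    have integrand : ∀ l : ℝ, (mpow ρ (1 - l) * X * mpow ρ l) i j
        = ∑ m, ∑ k, (U i k * Y k m * (star U) m j) * ((d k ^ (1 - l) * d m ^ l : ℝ) : ℂ) := by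
      intro l
      rw [mpow_eq, mpow_eq]
      conv_lhs => rw [hXY]
      rw [conjmul, conjmul, entry]
      refine Finset.sum_congr rfl fun m _ => Finset.sum_congr rfl fun k _ => ?_
      rw [Matrix.mul_diagonal, Matrix.diagonal_mul]
      push_cast
      ring
    have step1 : (Tinv ρ X) i j = ∫ l in (0:ℝ)..1,
        ∑ m, ∑ k, (U i k * Y k m * (star U) m j) * ((d k ^ (1 - l) * d m ^ l : ℝ) : ℂ) := by
      rw [Tinv]
      simp only [Matrix.of_apply]
      exact intervalIntegral.integral_congr fun l _ => integrand l
    rw [step1, intervalIntegral.integral_finset_sum (f := fun m l => ∑ k, (U i k * Y k m * (star U) m j) *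
          ((d k ^ (1 - l) * d m ^ l : ℝ) : ℂ)) (fun m _ =>
      (continuous_finset_sum _ fun k _ => continuous_const.mul (cont1 k m)).intervalIntegrable _ _)]
    rw [entry]
    refine Finset.sum_congr rfl fun m _ => ?_
    rw [intervalIntegral.integral_finset_sum (f := fun k l => (U i k * Y k m * (star U) m j) *
          ((d k ^ (1 - l) * d m ^ l : ℝ) : ℂ)) (fun k _ =>
      (continuous_const.mul (cont1 k m)).intervalIntegrable _ _)]
    refine Finset.sum_congr rfl fun k _ => ?_
    rw [intervalIntegral.integral_const_mul, intervalIntegral.integral_ofReal]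
    simp only [Matrix.of_apply, hFdef]
    ring
  -- Step C : `Rrep`
  set t : ℂ := (ρ * X).trace with htdef
  have hspec : ρ = U * Matrix.diagonal (fun i => ((d i : ℝ) : ℂ)) * star U := by
    exact hH.spectral_theorem
  set W : Mat c := (Matrix.of fun k m => Y k m * F k m)
      - t • Matrix.diagonal (fun i => ((d i : ℝ) : ℂ)) with hWdef
  have hRrep : Rrep ρ X = U * W * star U := by
    rw [Rrep, hTinv, ← htdef]
    rw [show t • ρ = U * (t • Matrix.diagonal (fun i => ((d i : ℝ) : ℂ))) * star U by
      rw [Matrix.mul_smul, Matrix.smul_mul, ← hspec]]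
    rw [← Matrix.sub_mul, ← Matrix.mul_sub, hWdef]
  -- inverse resolvent
  have hsum : ∀ l : ℝ, ρ + (l:ℂ) • 1
      = U * Matrix.diagonal (fun k => ((d k + l : ℝ) : ℂ)) * star U := by
    intro l
    have h1 : (l:ℂ) • (1 : Mat c) = U * ((l:ℂ) • 1) * star U := by
      rw [Matrix.mul_smul, mul_one, Matrix.smul_mul, hU1]
    have h2 : Matrix.diagonal (fun i => ((d i : ℝ) : ℂ)) + (l:ℂ) • (1 : Mat c)
        = Matrix.diagonal (fun k => ((d k + l : ℝ) : ℂ)) := by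
      ext k m
      by_cases hkm : k = m
      · subst hkm
        simp only [Matrix.add_apply, Matrix.diagonal_apply_eq, Matrix.smul_apply,
          Matrix.one_apply_eq, smul_eq_mul, mul_one]
        push_cast
        ring
      · simp [Matrix.diagonal_apply_ne _ hkm, Matrix.one_apply_ne hkm]
    conv_lhs => rw [hspec, h1]
    rw [← Matrix.add_mul, ← Matrix.mul_add, h2]
  have hinv : ∀ l : ℝ, 0 < l → (ρ + (l:ℂ) • 1)⁻¹
      = U * Matrix.diagonal (fun k => (((d k + l : ℝ) : ℂ))⁻¹) * star U := by
    intro l hl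
    apply Matrix.inv_eq_right_inv
    rw [hsum l, conjmul, Matrix.diagonal_mul_diagonal]
    have hd1 : (fun k => ((d k + l : ℝ) : ℂ) * (((d k + l : ℝ) : ℂ))⁻¹)
        = fun _ : Fin c => (1 : ℂ) := by
      funext k
      have : ((d k + l : ℝ) : ℂ) ≠ 0 := by
        exact_mod_cast (by have := hdpos k; positivity : (d k + l : ℝ) ≠ 0)
      exact mul_inv_cancel₀ this
    rw [hd1, Matrix.diagonal_one, mul_one, hU1]
  -- Step D : `Tmap`
  have hGint : ∀ k m : Fin c, Integrable
      (fun l : ℝ => ((((d k + l) * (d m + l))⁻¹ : ℝ) : ℂ))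
      (volume.restrict (Set.Ioi 0)) :=
    fun k m => (G_integrable (hdpos k) (hdpos m)).ofReal
  have hTmap : Tmap ρ (U * W * star U)
      = U * (Matrix.of fun k m => W k m * G k m) * star U := by
    ext i j
    have integrand : ∀ l ∈ Set.Ioi (0:ℝ),
        ((ρ + (l:ℂ) • 1)⁻¹ * (U * W * star U) * (ρ + (l:ℂ) • 1)⁻¹) i j
        = ∑ m, ∑ k, (U i k * W k m * (star U) m j) * ((((d k + l) * (d m + l))⁻¹ : ℝ) : ℂ) := by
      intro l hl
      rw [hinv l hl, conjmul, conjmul, entry]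
      refine Finset.sum_congr rfl fun m _ => Finset.sum_congr rfl fun k _ => ?_
      rw [Matrix.mul_diagonal, Matrix.diagonal_mul, Complex.ofReal_inv, Complex.ofReal_mul,
        mul_inv]
      ring
    have step1 : (Tmap ρ (U * W * star U)) i j = ∫ l in Set.Ioi (0:ℝ),
        ∑ m, ∑ k, (U i k * W k m * (star U) m j) * ((((d k + l) * (d m + l))⁻¹ : ℝ) : ℂ) := by
      rw [Tmap]
      simp only [Matrix.of_apply]
      exact setIntegral_congr_fun measurableSet_Ioi integrand
    rw [step1, integral_finset_sum _ (fun m _ =>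
      integrable_finset_sum _ fun k _ => (hGint k m).const_mul _)]
    rw [entry]
    refine Finset.sum_congr rfl fun m _ => ?_
    rw [integral_finset_sum _ (fun k _ => (hGint k m).const_mul _)]
    refine Finset.sum_congr rfl fun k _ => ?_
    have hcast : (∫ a in Set.Ioi (0:ℝ), ((((d k + a) * (d m + a))⁻¹ : ℝ) : ℂ)) = G k m := by
      rw [hGdef]
      show (∫ a in Set.Ioi (0:ℝ), ((((d k + a) * (d m + a))⁻¹ : ℝ) : ℂ))
        = ((∫ x in Set.Ioi (0:ℝ), ((d k + x) * (d m + x))⁻¹ : ℝ) : ℂ)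
      exact integral_ofReal
    rw [integral_const_mul, hcast]
    simp only [Matrix.of_apply]
    ring
  -- Step E : the kernel identity
  have hFG : ∀ k m : Fin c, F k m * G k m = 1 := by
    intro k m
    rw [hFdef, hGdef, ← Complex.ofReal_mul, FG_one (hdpos k) (hdpos m), Complex.ofReal_one]
  have hdG : ∀ k : Fin c, ((d k : ℝ) : ℂ) * G k k = 1 := by
    intro k
    rw [hGdef]
    simp only
    rw [G_self (hdpos k), ← Complex.ofReal_mul, mul_inv_cancel₀ (hdpos k).ne',
      Complex.ofReal_one]
  have hW : (Matrix.of fun k m => W k m * G k m) = Y - t • 1 := by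
    ext k m
    rw [hWdef]
    simp only [Matrix.of_apply, Matrix.sub_apply, Matrix.smul_apply, smul_eq_mul]
    by_cases hkm : k = m
    · subst hkm
      rw [Matrix.diagonal_apply_eq, Matrix.one_apply_eq]
      have h1 := hFG k k
      have h2 := hdG k
      linear_combination Y k k * h1 - t * h2
    · rw [Matrix.diagonal_apply_ne _ hkm, Matrix.one_apply_ne hkm]
      have h1 := hFG k m
      linear_combination Y k m * h1
  -- Step F : conclusion
  have hfinal : Tmap ρ (Rrep ρ X) = X - t • 1 := by
    rw [hRrep, hTmap, hW, Matrix.mul_sub, Matrix.sub_mul, ← hXY]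
    rw [Matrix.mul_smul, mul_one, Matrix.smul_mul, hU1]
  have hPi : Pi0 (X - t • 1) = X := by
    rw [Pi0, Matrix.trace_sub, hXtr, Matrix.trace_smul, Matrix.trace_one]
    have hc0 : (c : ℂ) ≠ 0 := Nat.cast_ne_zero.mpr (by omega)
    have hscal : ((0 : ℂ) - t • (Fintype.card (Fin c) : ℂ)) / (c : ℂ) = -t := by
      simp only [smul_eq_mul, Fintype.card_fin, zero_sub]
      field_simp
    rw [hscal]
    simp [sub_eq_add_neg, neg_smul]
  rw [hfinal, hPi]

end
end

section
/- Let ρ ∈ D_c and X, Y ∈ H_{c,0}. The curve t ↦ exp_ρ(X + t·Y) := Γ(Γ⁻¹(ρ) + X + t·Y) has derivative at t = 0 equal to R_σ[Y], where σ := Γ(Γ⁻¹(ρ) + X). -/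
/- STATEMENT 11: Let ρ ∈ D_c and X, Y ∈ H_{c,0}. The curve
t ↦ exp_ρ(X + t·Y) := Γ(Γ⁻¹(ρ) + X + t·Y) has derivative at t = 0 equal to R_σ[Y],
where σ := Γ(Γ⁻¹(ρ) + X) (derivative stated entrywise). -/

noncomputable section
open Matrix MeasureTheory
open scoped ComplexOrder

open NormedSpace intervalIntegral


section Duhamel
variable {𝔸 : Type*} [NormedRing 𝔸] [NormedAlgebra ℝ 𝔸] [CompleteSpace 𝔸]

lemma exp_hasDerivAt_aux (A Y : 𝔸) :
    HasDerivAt (fun t : ℝ => exp (A + t • Y))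
      (∫ s in (0:ℝ)..1, exp ((1 - s) • A) * Y * exp (s • A)) 0 := by
  letI : NormedAlgebra ℚ 𝔸 := NormedAlgebra.restrictScalars ℚ ℝ 𝔸
  set Φ : ℝ → 𝔸 := fun t => ∫ s in (0:ℝ)..1,
      exp ((1 - s) • (A + t • Y)) * Y * exp (s • A) with hΦ
  have hcont : Continuous Φ := by
    apply continuous_parametric_intervalIntegral_of_continuous'
    apply Continuous.mul
    · apply Continuous.mul
      · exact exp_continuous.comp (by fun_prop)
      · exact continuous_const
    · exact exp_continuous.comp (by fun_prop)
  have key : ∀ t : ℝ, exp (A + t • Y) - exp A = t • Φ t := by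
    intro t
    set M := A + t • Y with hM
    have hderiv : ∀ s ∈ Set.uIcc (0:ℝ) 1,
        HasDerivAt (fun s : ℝ => exp ((1 - s) • M) * exp (s • A))
          (-(t • (exp ((1 - s) • M) * Y * exp (s • A)))) s := by
      intro s _
      have h1 : HasDerivAt (fun u : ℝ => exp (u • M)) (M * exp ((1 - s) • M)) (1 - s) :=
        hasDerivAt_exp_smul_const' M (1 - s)
      have hf : HasDerivAt (fun s : ℝ => 1 - s) (-1 : ℝ) s := by
        simpa using (hasDerivAt_id s).const_sub 1
      have h1' : HasDerivAt (fun s : ℝ => exp ((1 - s) • M))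
          ((-1 : ℝ) • (M * exp ((1 - s) • M))) s := h1.scomp s hf
      have h2 : HasDerivAt (fun s : ℝ => exp (s • A)) (A * exp (s • A)) s :=
        hasDerivAt_exp_smul_const' A s
      have := h1'.mul h2
      convert this using 1
      · rfl
      have hcomm : M * exp ((1 - s) • M) = exp ((1 - s) • M) * M :=
        ((Commute.refl M).smul_right (1 - s)).exp_right |>.eq
      rw [hcomm, hM]
      simp only [mul_add, add_mul, smul_mul_assoc, mul_smul_comm, mul_assoc, smul_smul]
      module
    have hint : IntervalIntegrable
        (fun s : ℝ => -(t • (exp ((1 - s) • M) * Y * exp (s • A)))) volume 0 1 := by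
      apply Continuous.intervalIntegrable
      apply Continuous.neg
      apply Continuous.const_smul
      apply Continuous.mul
      · exact ((exp_continuous.comp (by fun_prop)).mul continuous_const)
      · exact exp_continuous.comp (by fun_prop)
    have hftc := intervalIntegral.integral_eq_sub_of_hasDerivAt hderiv hint
    simp only [sub_self, zero_smul, one_smul, sub_zero, exp_zero, one_mul, mul_one] at hftc
    rw [intervalIntegral.integral_neg, intervalIntegral.integral_smul] at hftc
    have hfold : Φ t = ∫ s in (0:ℝ)..1, exp ((1 - s) • M) * Y * exp (s • A) := by
      simp only [hΦ, ← hM]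
    rw [hfold, ← neg_sub (exp A) (exp M), ← hftc, neg_neg]
  have hΦ0 : Φ 0 = ∫ s in (0:ℝ)..1, exp ((1 - s) • A) * Y * exp (s • A) := by
    simp only [hΦ, zero_smul, add_zero]
  rw [hasDerivAt_iff_tendsto_slope, ← hΦ0]
  have heq : ∀ x ∈ ({0}ᶜ : Set ℝ), Φ x = slope (fun t : ℝ => exp (A + t • Y)) 0 x := by
    intro x hx
    have hx0 : x ≠ 0 := hx
    rw [slope_def_module]
    simp only [sub_zero, zero_smul, add_zero]
    rw [key x, smul_smul, inv_mul_cancel₀ hx0, one_smul]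
  exact tendsto_nhdsWithin_congr heq ((hcont.tendsto 0).mono_left nhdsWithin_le_nhds)

lemma exp_add_smul_one_aux (A : 𝔸) (r : ℝ) :
    exp (A + r • (1:𝔸)) = Real.exp r • exp A := by
  letI : NormedAlgebra ℚ 𝔸 := NormedAlgebra.restrictScalars ℚ ℝ 𝔸
  have hcomm : Commute A (r • (1:𝔸)) := (Commute.one_right A).smul_right r
  rw [exp_add_of_commute hcomm]
  have h1 : exp (r • (1:𝔸)) = Real.exp r • 1 := by
    rw [← Algebra.algebraMap_eq_smul_one, ← algebraMap_exp_comm, ← Real.exp_eq_exp_ℝ,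
      Algebra.algebraMap_eq_smul_one]
  rw [h1, mul_smul_comm, mul_one]

end Duhamel

set_option maxHeartbeats 2000000 in
set_option maxHeartbeats 2000000 in
theorem stmt11 {c : ℕ} (hc : 2 ≤ c) (ρ X Y : Mat c) (hρ : IsDensity ρ)
    (hX : X.IsHermitian) (hXtr : X.trace = 0)
    (hY : Y.IsHermitian) (hYtr : Y.trace = 0) :
    ∀ i j, HasDerivAt (fun t : ℝ => Gamma (GammaInv ρ + X + t • Y) i j)
      ((Rrep (Gamma (GammaInv ρ + X)) Y) i j) 0 := by
  intro i j
  letI : SeminormedRing (Mat c) := Matrix.linftyOpSemiNormedRing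
  letI : NormedRing (Mat c) := Matrix.linftyOpNormedRing
  letI : NormedAlgebra ℝ (Mat c) := Matrix.linftyOpNormedAlgebra
  letI : NormedAlgebra ℂ (Mat c) := Matrix.linftyOpNormedAlgebra
  letI : NormedAlgebra ℚ (Mat c) := NormedAlgebra.restrictScalars ℚ ℝ (Mat c)
  haveI : Nonempty (Fin c) := ⟨⟨0, by omega⟩⟩
  set A : Mat c := GammaInv ρ + X with hA_def
  -- A is Hermitian
  have hlog : (mlog ρ).IsHermitian := by
    have : IsSelfAdjoint (mlog ρ) := cfc_predicate Real.log ρ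
    exact this
  have htrstar : star ((mlog ρ).trace) = (mlog ρ).trace := by
    rw [← Matrix.trace_conjTranspose, hlog.eq]
  have hGI : (GammaInv ρ).IsHermitian := by
    refine hlog.sub ?_
    show ((((mlog ρ).trace / c) • (1 : Mat c)))ᴴ = _
    rw [Matrix.conjTranspose_smul, Matrix.conjTranspose_one, star_div₀, htrstar, star_natCast]
  have hAherm : A.IsHermitian := hGI.add hX
  have hsa : IsSelfAdjoint A := hAherm
  -- exp over ℂ = exp over ℝ
  have hexp_eq : ∀ M : Mat c, mexp M = exp M := fun M => by
    rw [mexp]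
  have hcfc : exp A = cfc Real.exp A := (@CFC.real_exp_eq_normedSpace_exp _ _ _ _ Matrix.IsHermitian.instContinuousFunctionalCalculus _ hsa).symm
  -- the trace of exp A
  set T : ℝ := ∑ k, Real.exp (hAherm.eigenvalues k) with hT_def
  have hTpos : 0 < T := Finset.sum_pos (fun k _ => Real.exp_pos _) Finset.univ_nonempty
  have hT0 : ((T:ℂ)) ≠ 0 := by exact_mod_cast hTpos.ne'
  have htrace : (exp A).trace = (T : ℂ) := by
    rw [hcfc, hAherm.cfc_eq, Matrix.IsHermitian.cfc, Unitary.conjStarAlgAut_apply, Matrix.trace_mul_cycle,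
      Unitary.star_mul_self_of_mem (SetLike.coe_mem _), one_mul, Matrix.trace_diagonal]
    rw [hT_def, Complex.ofReal_sum]
    exact Finset.sum_congr rfl fun k _ => rfl
  -- σ
  set σ : Mat c := Gamma A with hσ_def
  have hσ : σ = (T:ℂ)⁻¹ • exp A := by
    rw [hσ_def, Gamma, hexp_eq, htrace]
  -- B
  set B : Mat c := A + (-(Real.log T)) • (1 : Mat c) with hB_def
  have hexpu : ∀ u : ℝ, exp (u • B) = Real.exp (-(u * Real.log T)) • exp (u • A) := by
    intro u
    have h : u • B = u • A + (-(u * Real.log T)) • (1 : Mat c) := by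
      rw [hB_def, smul_add, smul_smul]
      ring_nf
    rw [h]
    exact exp_add_smul_one_aux _ _
  have hBσ : exp B = σ := by
    have := hexpu 1
    simp only [one_smul, one_mul] at this
    rw [this, Real.exp_neg, Real.exp_log hTpos, hσ]
    rw [show ((T:ℂ))⁻¹ • exp A = ((T⁻¹ : ℝ) : ℂ) • exp A by push_cast; rfl]
    rw [show (((T⁻¹ : ℝ) : ℂ)) • exp A = (T⁻¹ : ℝ) • exp A from by
      rw [← Complex.coe_algebraMap, algebraMap_smul]]
  have hB_sa : IsSelfAdjoint B := by
    have h1 : ((-(Real.log T)) • (1 : Mat c)).IsHermitian := by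
      show ((-(Real.log T)) • (1 : Mat c))ᴴ = _
      rw [Matrix.conjTranspose_smul, Matrix.conjTranspose_one]
      norm_num
    exact hAherm.add h1
  -- mpow σ s = exp (s • B)
  have hmpow : ∀ s : ℝ, mpow σ s = exp (s • B) := by
    intro s
    have h1 : σ = cfc Real.exp B := by
      rw [← hBσ]
      exact (@CFC.real_exp_eq_normedSpace_exp _ _ _ _ Matrix.IsHermitian.instContinuousFunctionalCalculus _ hB_sa).symm
    have hg : ContinuousOn (fun x : ℝ => x ^ s) (Real.exp '' spectrum ℝ B) := by
      intro x hx
      obtain ⟨y, -, rfl⟩ := hx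
      exact (Real.continuousAt_rpow_const _ _ (Or.inl (Real.exp_pos y).ne')).continuousWithinAt
    rw [mpow, h1, ← cfc_comp (fun x : ℝ => x ^ s) Real.exp B hB_sa hg
      Real.continuous_exp.continuousOn]
    rw [cfc_congr (g := fun x : ℝ => Real.exp (s • x))
      (fun x _ => by simp only [Function.comp_apply, smul_eq_mul, mul_comm s x, Real.exp_mul])]
    rw [cfc_comp_smul s Real.exp B Real.continuous_exp.continuousOn hB_sa]
    exact @CFC.real_exp_eq_normedSpace_exp _ _ _ _ Matrix.IsHermitian.instContinuousFunctionalCalculus _ (IsSelfAdjoint.smul (star_trivial s) hB_sa)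
  -- the integrand identity
  set F : ℝ → Mat c := fun s => exp ((1 - s) • A) * Y * exp (s • A) with hF_def
  have hintegrand : ∀ l : ℝ,
      mpow σ (1 - l) * Y * mpow σ l = (T⁻¹ : ℝ) • F l := by
    intro l
    rw [hmpow, hmpow, hexpu, hexpu, hF_def]
    simp only [smul_mul_assoc, mul_smul_comm, smul_smul]
    congr 1
    rw [← Real.exp_add]
    rw [show -(l * Real.log T) + -((1 - l) * Real.log T) = -Real.log T by ring]
    rw [Real.exp_neg, Real.exp_log hTpos]
  -- derivative pieces
  have hFcont : Continuous F := by
    apply Continuous.mul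
    · exact (exp_continuous.comp (by fun_prop)).mul continuous_const
    · exact exp_continuous.comp (by fun_prop)
  set D : Mat c := ∫ s in (0:ℝ)..1, F s with hD_def
  have hder : HasDerivAt (fun t : ℝ => exp (A + t • Y)) D 0 := exp_hasDerivAt_aux A Y
  haveI : FiniteDimensional ℝ (Mat c) := by infer_instance
  let eCLM : Mat c →L[ℝ] ℂ := LinearMap.toContinuousLinearMap
    { toFun := fun M : Mat c => M i j
      map_add' := fun _ _ => rfl
      map_smul' := fun _ _ => rfl }
  let trCLM : Mat c →L[ℝ] ℂ :=
    LinearMap.toContinuousLinearMap (Matrix.traceLinearMap (α := ℝ) (R := ℂ) (n := Fin c))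
  have hD_entry : D i j = ∫ s in (0:ℝ)..1, F s i j := by
    have h := eCLM.intervalIntegral_comp_comm (hFcont.intervalIntegrable (μ := volume) 0 1)
    exact h.symm
  have hFtr : ∀ s : ℝ, (F s).trace = (exp A * Y).trace := by
    intro s
    rw [hF_def]
    show ((exp ((1-s) • A) * Y) * exp (s • A)).trace = _
    rw [Matrix.trace_mul_cycle]
    have h2 : exp (s • A) * exp ((1 - s) • A) = exp A := by
      have h3 : exp (s • A + (1 - s) • A) = exp (s • A) * exp ((1 - s) • A) :=
        exp_add_of_commute (((Commute.refl A).smul_left s).smul_right (1 - s))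
      rw [← h3]
      congr 1
      rw [← add_smul]
      norm_num
    rw [h2]
  have htrD : (D).trace = (exp A * Y).trace := by
    have h := trCLM.intervalIntegral_comp_comm (hFcont.intervalIntegrable (μ := volume) 0 1)
    have h2 : (∫ s in (0:ℝ)..1, (F s).trace) = D.trace := h
    rw [← h2]
    simp only [hFtr]
    simp
  -- trace derivative
  have htrf : HasDerivAt (fun t : ℝ => (exp (A + t • Y)).trace) ((exp A * Y).trace) 0 := by
    have h := trCLM.hasFDerivAt.comp_hasDerivAt 0 hder
    rw [← htrD]
    exact h
  have hτt0 : (exp (A + (0:ℝ) • Y)).trace = (T:ℂ) := by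
    rw [zero_smul, add_zero, htrace]
  have hne : (exp (A + (0:ℝ) • Y)).trace ≠ 0 := by rw [hτt0]; exact hT0
  have hinv : HasDerivAt (fun t : ℝ => ((exp (A + t • Y)).trace)⁻¹)
      (-((exp A * Y).trace) / (T:ℂ)^2) 0 := by
    have h := (hasDerivAt_const (0:ℝ) (1:ℂ)).div htrf hne
    rw [hτt0] at h
    have h2 : ((0:ℂ) * (T:ℂ) - 1 * (exp A * Y).trace) / (T:ℂ)^2
        = -((exp A * Y).trace) / (T:ℂ)^2 := by ring
    rw [h2] at h
    simpa [one_div, Pi.div_def] using h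
  set V : Mat c := (T:ℂ)⁻¹ • D + (-((exp A * Y).trace) / (T:ℂ)^2) • exp A with hV_def
  have hsm : HasDerivAt (fun t : ℝ => ((exp (A + t • Y)).trace)⁻¹ • exp (A + t • Y)) V 0 := by
    have h := hinv.smul hder
    have e0 : A + (0:ℝ) • Y = A := by rw [zero_smul, add_zero]
    rw [e0, htrace] at h
    exact h
  have hentry : HasDerivAt
      (fun t : ℝ => (((exp (A + t • Y)).trace)⁻¹ • exp (A + t • Y)) i j) (V i j) 0 :=
    eCLM.hasFDerivAt.comp_hasDerivAt 0 hsm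
  have hgoalfun : (fun t : ℝ => Gamma (A + t • Y) i j)
      = fun t : ℝ => (((exp (A + t • Y)).trace)⁻¹ • exp (A + t • Y)) i j := by
    funext t
    rw [Gamma, hexp_eq]
  rw [hgoalfun]
  have hval : (Rrep σ Y) i j = V i j := by
    have hTinv : Tinv σ Y i j = (T:ℂ)⁻¹ * D i j := by
      rw [Tinv, Matrix.of_apply]
      have h1 : ∀ l : ℝ, (mpow σ (1 - l) * Y * mpow σ l) i j = (T:ℂ)⁻¹ * (F l i j) := by
        intro l
        rw [hintegrand l, Matrix.smul_apply]
        rw [Complex.real_smul, Complex.ofReal_inv]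
      simp only [h1]
      rw [intervalIntegral.integral_const_mul, ← hD_entry]
    have hσY : (σ * Y).trace = (T:ℂ)⁻¹ * (exp A * Y).trace := by
      rw [hσ, smul_mul_assoc, Matrix.trace_smul, smul_eq_mul]
    have hσij : σ i j = (T:ℂ)⁻¹ * (exp A) i j := by
      rw [hσ, Matrix.smul_apply, smul_eq_mul]
    rw [Rrep, Matrix.sub_apply, hTinv, Matrix.smul_apply, smul_eq_mul, hσY, hσij, hV_def,
      Matrix.add_apply, Matrix.smul_apply, Matrix.smul_apply, smul_eq_mul, smul_eq_mul]
    ring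
  rw [hval]
  exact hentry
end
end

section
/- Let V be a finite vertex set with nonnegative weights ω_{ik}, let U be a unitary c×c matrix, let S = (S_i)_{i∈V} with each S_i ∈ S_c, and set μ_i := U·Diag(S_i)·U*. Then for each i ∈ V: (i) for every k, R_{μ_i}[μ_k] = μ_iμ_k − tr(μ_iμ_k)·μ_i, and (ii) R_{μ_i}[∑_k ω_{ik} μ_k] = U·Diag(R_{S_i}(∑_k ω_{ik} S_k))·U*, where R_p v := Diag(p)v − ⟨p,v⟩p is the simplex replicator operator. In particular the submanifold of commuting density matrices simultaneously diagonalized by U is invariant under the flow μ̇_i = R_{μ_i}[∑_k ω_{ik} μ_k]. -/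
/- STATEMENT 18: Let V be a finite vertex set with nonnegative weights ω_{ik}, U a
unitary c×c matrix, S = (S_i)_{i∈V} with S_i ∈ S_c, and μ_i := U·Diag(S_i)·U*. Then
(i) R_{μ_i}[μ_k] = μ_iμ_k − tr(μ_iμ_k)·μ_i, and
(ii) R_{μ_i}[∑_k ω_{ik} μ_k] = U·Diag(R_{S_i}(∑_k ω_{ik} S_k))·U*, where
R_p v := Diag(p)v − ⟨p,v⟩p is the simplex replicator operator. In particular the
submanifold of commuting density matrices simultaneously diagonalized by U is invariant
under the flow μ̇_i = R_{μ_i}[∑_k ω_{ik} μ_k]. -/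

noncomputable section
open Matrix MeasureTheory
open scoped ComplexOrder

namespace Stmt18Aux

variable {c : ℕ}

/-- conjugation multiplication -/
lemma conj_mul (U : Mat c) (hU : U ∈ Matrix.unitaryGroup (Fin c) ℂ) (D E : Mat c) :
    (U * D * Uᴴ) * (U * E * Uᴴ) = U * (D * E) * Uᴴ := by
  have h1 : Uᴴ * U = 1 := by
    simpa [Matrix.star_eq_conjTranspose] using hU.1
  calc (U * D * Uᴴ) * (U * E * Uᴴ) = U * D * (Uᴴ * U) * E * Uᴴ := by
        simp only [mul_assoc]
    _ = U * (D * E) * Uᴴ := by rw [h1]; simp only [mul_one, mul_assoc]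

lemma star_cdiag (p : Fin c → ℝ) :
    star (Matrix.diagonal (fun a => (p a : ℂ))) = Matrix.diagonal (fun a => (p a : ℂ)) := by
  simp [Matrix.star_eq_conjTranspose, Matrix.diagonal_conjTranspose, Pi.star_def,
    Complex.star_def, Complex.conj_ofReal]

lemma star_conj (U : Mat c) (D : Mat c) (hD : star D = D) :
    star (U * D * Uᴴ) = U * D * Uᴴ := by
  rw [StarMul.star_mul, StarMul.star_mul, hD]
  simp only [Matrix.star_eq_conjTranspose, Matrix.conjTranspose_conjTranspose, mul_assoc]

lemma conj_selfAdjoint (U : Mat c) (hU : U ∈ Matrix.unitaryGroup (Fin c) ℂ) (p : Fin c → ℝ) :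
    _root_.IsSelfAdjoint (U * Matrix.diagonal (fun a => (p a : ℂ)) * Uᴴ) := by
  exact star_conj U _ (star_cdiag p)

lemma conj_spectrum (U : Mat c) (hU : U ∈ Matrix.unitaryGroup (Fin c) ℂ) (p : Fin c → ℝ) :
    spectrum ℝ (U * Matrix.diagonal (fun a => (p a : ℂ)) * Uᴴ) = Set.range p := by
  have hAu : U * Matrix.diagonal (fun a => (p a : ℂ)) * Uᴴ
      = (⟨U, hU⟩ : Matrix.unitaryGroup (Fin c) ℂ) * Matrix.diagonal (fun a => (p a : ℂ)) *
        (star (⟨U, hU⟩ : Matrix.unitaryGroup (Fin c) ℂ) : Mat c) := by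
    simp [Matrix.star_eq_conjTranspose]
  ext x
  rw [hAu, Unitary.spectrum_star_right_conjugate, ← spectrum.algebraMap_mem_iff ℂ,
    spectrum_diagonal]
  constructor
  · rintro ⟨a, ha⟩
    simp only [Complex.coe_algebraMap] at ha
    exact ⟨a, by exact_mod_cast ha⟩
  · rintro ⟨a, rfl⟩
    exact ⟨a, by simp [Complex.coe_algebraMap]⟩

set_option maxHeartbeats 1000000 in
lemma cfc_conj (U : Mat c) (hU : U ∈ Matrix.unitaryGroup (Fin c) ℂ)
    (p : Fin c → ℝ) (f : ℝ → ℝ) :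
    cfc f (U * Matrix.diagonal (fun a => (p a : ℂ)) * Uᴴ)
      = U * Matrix.diagonal (fun a => (f (p a) : ℂ)) * Uᴴ := by
  set A := U * Matrix.diagonal (fun a => (p a : ℂ)) * Uᴴ with hA_def
  have hA : _root_.IsSelfAdjoint A := conj_selfAdjoint U hU p
  have hspec : spectrum ℝ A = Set.range p := conj_spectrum U hU p
  have hUU : U * Uᴴ = 1 := by
    simpa [Matrix.star_eq_conjTranspose] using hU.2
  let pm : Fin c → spectrum ℝ A := fun a => ⟨p a, hspec ▸ Set.mem_range_self a⟩
  let ψ : C(spectrum ℝ A, ℝ) →⋆ₐ[ℝ] Mat c :=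
  { toFun := fun g => U * Matrix.diagonal (fun a => ((g (pm a) : ℝ) : ℂ)) * Uᴴ
    map_one' := by
      simp only [ContinuousMap.one_apply, Complex.ofReal_one]
      rw [show (Matrix.diagonal (fun _ : Fin c => (1 : ℂ))) = 1 from Matrix.diagonal_one]
      rw [mul_one, hUU]
    map_mul' := fun g h => by
      rw [conj_mul U hU, Matrix.diagonal_mul_diagonal]
      congr 2
      ext a
      push_cast
      simp
    map_zero' := by simp
    map_add' := fun g h => by
      have hd : (Matrix.diagonal fun a => (((g + h) (pm a) : ℝ) : ℂ))
          = Matrix.diagonal (fun a => ((g (pm a) : ℝ) : ℂ))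
            + Matrix.diagonal (fun a => ((h (pm a) : ℝ) : ℂ)) := by
        rw [Matrix.diagonal_add]
        congr 1
        ext a
        push_cast
        simp
      show U * _ * Uᴴ = _
      rw [hd, mul_add, add_mul]
    commutes' := fun r => by
      have hd : (Matrix.diagonal fun a : Fin c =>
            ((((algebraMap ℝ C(spectrum ℝ A, ℝ)) r) (pm a) : ℝ) : ℂ)) = (r : ℂ) • 1 := by
        rw [Matrix.smul_one_eq_diagonal]
        rfl
      show U * _ * Uᴴ = _
      rw [hd, mul_smul_comm, smul_mul_assoc, mul_one, hUU]
      rw [show ((r : ℂ)) = algebraMap ℝ ℂ r from rfl, algebraMap_smul,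
        Algebra.algebraMap_eq_smul_one]
    map_star' := fun g => by
      simp only [star_trivial]
      exact (star_conj U _ (star_cdiag _)).symm }
  have h0 : FiniteDimensional ℝ C(spectrum ℝ A, ℝ) :=
    FiniteDimensional.of_injective (ContinuousMap.coeFnLinearMap ℝ (M := ℝ))
      DFunLike.coe_injective
  have hcont : Continuous ψ := LinearMap.continuous_of_finiteDimensional
    (ψ : C(spectrum ℝ A, ℝ) →⋆ₐ[ℝ] Mat c).toLinearMap
  have hid : ψ (ContinuousMap.restrict (spectrum ℝ A) (ContinuousMap.id ℝ)) = A := rfl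
  have hψ := cfcHom_eq_of_continuous_of_map_id hA ψ hcont hid
  rw [cfc_apply f A hA (by rw [continuousOn_iff_continuous_restrict]; fun_prop), hψ]
  rfl


lemma mpow_conj (U : Mat c) (hU : U ∈ Matrix.unitaryGroup (Fin c) ℂ)
    (p : Fin c → ℝ) (t : ℝ) :
    mpow (U * Matrix.diagonal (fun a => (p a : ℂ)) * Uᴴ) t
      = U * Matrix.diagonal (fun a => ((p a ^ t : ℝ) : ℂ)) * Uᴴ :=
  cfc_conj U hU p (fun x => x ^ t)

lemma trace_conj (U : Mat c) (hU : U ∈ Matrix.unitaryGroup (Fin c) ℂ) (v : Fin c → ℂ) :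
    (U * Matrix.diagonal v * Uᴴ).trace = ∑ a, v a := by
  have h1 : Uᴴ * U = 1 := by
    simpa [Matrix.star_eq_conjTranspose] using hU.1
  rw [Matrix.trace_mul_comm, ← mul_assoc, h1, one_mul, Matrix.trace_diagonal]

end Stmt18Aux

namespace Stmt18Aux

lemma Tinv_conj (U : Mat c) (hU : U ∈ Matrix.unitaryGroup (Fin c) ℂ)
    (p d : Fin c → ℝ) (hp : ∀ a, 0 < p a) :
    Tinv (U * Matrix.diagonal (fun a => (p a : ℂ)) * Uᴴ)
        (U * Matrix.diagonal (fun a => (d a : ℂ)) * Uᴴ)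
      = (U * Matrix.diagonal (fun a => (p a : ℂ)) * Uᴴ)
        * (U * Matrix.diagonal (fun a => (d a : ℂ)) * Uᴴ) := by
  set ρ := U * Matrix.diagonal (fun a => (p a : ℂ)) * Uᴴ with hρ
  set X := U * Matrix.diagonal (fun a => (d a : ℂ)) * Uᴴ with hX
  have hconst : ∀ l : ℝ, mpow ρ (1 - l) * X * mpow ρ l = ρ * X := by
    intro l
    rw [hρ, hX, mpow_conj U hU, mpow_conj U hU, conj_mul U hU, conj_mul U hU,
      conj_mul U hU, Matrix.diagonal_mul_diagonal, Matrix.diagonal_mul_diagonal,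
      Matrix.diagonal_mul_diagonal]
    refine congrArg (fun D => U * D * Uᴴ) ?_
    rw [Matrix.diagonal_eq_diagonal_iff]
    intro a
    have : (p a ^ (1 - l) : ℝ) * (d a) * (p a ^ l) = p a * d a := by
      rw [mul_right_comm, ← Real.rpow_add (hp a), sub_add_cancel, Real.rpow_one]
    exact_mod_cast this
  ext i j
  show (∫ l in (0:ℝ)..1, (mpow ρ (1 - l) * X * mpow ρ l) i j) = (ρ * X) i j
  have : ∀ l : ℝ, (mpow ρ (1 - l) * X * mpow ρ l) i j = (ρ * X) i j := fun l => by
    rw [hconst l]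
  simp only [this]
  simp

end Stmt18Aux

theorem stmt18 {c : ℕ} (hc : 2 ≤ c) {V : Type*} [Fintype V]
    (ω : V → V → ℝ) (hω : ∀ i k, 0 ≤ ω i k)
    (U : Mat c) (hU : U ∈ Matrix.unitaryGroup (Fin c) ℂ)
    (S : V → Fin c → ℝ) (hS : ∀ i, InSimplex (S i))
    (μ : V → Mat c)
    (hμ : ∀ i, μ i = U * Matrix.diagonal (fun a => (S i a : ℂ)) * Uᴴ) :
    (∀ i k, Rrep (μ i) (μ k) = μ i * μ k - ((μ i * μ k).trace) • μ i) ∧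
    (∀ i, Rrep (μ i) (∑ k, ω i k • μ k)
      = U * Matrix.diagonal
          (fun a => ((Rp (S i) (∑ k, ω i k • S k)) a : ℂ)) * Uᴴ) := by
  constructor
  · intro i k
    simp only [Rrep]
    rw [hμ i, hμ k, Stmt18Aux.Tinv_conj U hU _ _ (fun a => (hS i).1 a)]
  · intro i
    set d : Fin c → ℝ := ∑ k, ω i k • S k with hd
    have hX : (∑ k, ω i k • μ k)
        = U * Matrix.diagonal (fun a => (d a : ℂ)) * Uᴴ := by
      have h1 : ∀ k, ω i k • μ k
          = U * (ω i k • Matrix.diagonal (fun a => (S k a : ℂ))) * Uᴴ := by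
        intro k; rw [hμ k, mul_smul_comm, smul_mul_assoc]
      rw [Finset.sum_congr rfl (fun k _ => h1 k), ← Finset.sum_mul, ← Finset.mul_sum]
      refine congrArg (fun D => U * D * Uᴴ) ?_
      ext a b
      simp only [Matrix.sum_apply, Matrix.smul_apply, Matrix.diagonal_apply]
      by_cases h : a = b
      · subst h
        simp only [if_pos rfl, hd, Finset.sum_apply, Pi.smul_apply, smul_eq_mul]
        push_cast
        simp [Complex.real_smul]
      · simp [h]
    simp only [Rrep]
    rw [hX, hμ i, Stmt18Aux.Tinv_conj U hU _ _ (fun a => (hS i).1 a),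
      Stmt18Aux.conj_mul U hU, Matrix.diagonal_mul_diagonal,
      Stmt18Aux.trace_conj U hU]
    rw [show (∑ a, (S i a : ℂ) * (d a : ℂ)) • (U * Matrix.diagonal (fun a => (S i a : ℂ)) * Uᴴ)
        = U * ((∑ a, (S i a : ℂ) * (d a : ℂ)) • Matrix.diagonal (fun a => (S i a : ℂ))) * Uᴴ by
      rw [mul_smul_comm, smul_mul_assoc]]
    rw [← sub_mul, ← mul_sub]
    refine congrArg (fun D => U * D * Uᴴ) ?_
    rw [← Matrix.diagonal_smul, Matrix.diagonal_sub, Matrix.diagonal_eq_diagonal_iff]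
    intro a
    simp only [Pi.sub_apply, Pi.smul_apply, smul_eq_mul, Rp]
    push_cast
    ring
end
end

section
/- Let V be a finite vertex set with nonnegative weights ω_{ik} satisfying ∑_{k∈N_i} ω_{ik} = 1, let U be a unitary c×c matrix, and let S : [0,∞) → (S_c)^V be a differentiable solution of the assignment flow Ṡ_i(t) = R_{S_i(t)}(∑_{k∈N_i} ω_{ik} S_k(t)) for all i ∈ V. Then μ_i(t) := U·Diag(S_i(t))·U* defines a solution of the quantum state assignment flow, i.e. μ_i(t) ∈ D_c and μ̇_i(t) = R_{μ_i(t)}[∑_{k∈N_i} ω_{ik} μ_k(t)] for all i ∈ V and all t. -/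
/- STATEMENT 19: Let V be a finite vertex set with nonnegative weights ω_{ik} satisfying
∑_{k∈N_i} ω_{ik} = 1, U a unitary c×c matrix, and S : [0,∞) → (S_c)^V a differentiable
solution of the assignment flow Ṡ_i = R_{S_i}(∑_{k∈N_i} ω_{ik} S_k). Then
μ_i(t) := U·Diag(S_i(t))·U* defines a solution of the quantum state assignment flow,
i.e. μ_i(t) ∈ D_c and μ̇_i = R_{μ_i}[∑_{k∈N_i} ω_{ik} μ_k] (derivatives stated
entrywise). -/

noncomputable section
open Matrix MeasureTheory
open scoped ComplexOrder

namespace Stmt19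

variable {c : ℕ}

/-- Unitary conjugation of a diagonal matrix. -/
def conj (U : Mat c) (d : Fin c → ℂ) : Mat c := U * Matrix.diagonal d * Uᴴ

variable {U : Mat c}

lemma hUU' (hU : U ∈ Matrix.unitaryGroup (Fin c) ℂ) : U * Uᴴ = 1 := by
  have := Matrix.mem_unitaryGroup_iff.mp hU
  rwa [Matrix.star_eq_conjTranspose] at this

lemma hUU (hU : U ∈ Matrix.unitaryGroup (Fin c) ℂ) : Uᴴ * U = 1 := by
  have := Matrix.mem_unitaryGroup_iff'.mp hU
  rwa [Matrix.star_eq_conjTranspose] at this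

lemma conj_apply (d : Fin c → ℂ) (a b : Fin c) :
    conj U d a b = ∑ m, U a m * d m * star (U b m) := by
  rw [conj]
  rw [Matrix.mul_apply]
  exact Finset.sum_congr rfl fun m _ => by
    rw [Matrix.mul_diagonal, Matrix.conjTranspose_apply]

lemma conj_mul (hU : U ∈ Matrix.unitaryGroup (Fin c) ℂ) (d e : Fin c → ℂ) :
    conj U d * conj U e = conj U (fun m => d m * e m) := by
  simp only [conj, Matrix.mul_assoc]
  rw [← Matrix.mul_assoc Uᴴ U, hUU hU, Matrix.one_mul,
    ← Matrix.mul_assoc (Matrix.diagonal d), Matrix.diagonal_mul_diagonal]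

lemma conj_trace (hU : U ∈ Matrix.unitaryGroup (Fin c) ℂ) (d : Fin c → ℂ) :
    (conj U d).trace = ∑ m, d m := by
  rw [conj, Matrix.trace_mul_cycle, hUU hU, Matrix.one_mul, Matrix.trace_diagonal]

lemma conj_sub (d e : Fin c → ℂ) : conj U d - conj U e = conj U (fun m => d m - e m) := by
  simp only [conj, ← Matrix.diagonal_sub, Matrix.sub_mul, Matrix.mul_sub]

lemma conj_smul (z : ℂ) (d : Fin c → ℂ) : z • conj U d = conj U (fun m => z * d m) := by
  have h : (fun m => z * d m) = z • d := by funext m; simp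
  rw [conj, conj, h, Matrix.diagonal_smul, Matrix.mul_smul, Matrix.smul_mul]

lemma conj_star_real (v : Fin c → ℝ) :
    star (conj U fun m => (v m : ℂ)) = conj U (fun m => (v m : ℂ)) := by
  have h : (star fun m => ((v m : ℂ))) = fun m => (v m : ℂ) := by
    funext m; simp [Complex.conj_ofReal]
  simp only [conj, StarMul.star_mul, star_star, Matrix.star_eq_conjTranspose,
    Matrix.diagonal_conjTranspose, Matrix.conjTranspose_conjTranspose, h, Matrix.mul_assoc]

lemma conj_isSelfAdjoint (p : Fin c → ℝ) :
    IsSelfAdjoint (conj U fun m => (p m : ℂ)) := conj_star_real p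

lemma mem_spectrum (hU : U ∈ Matrix.unitaryGroup (Fin c) ℂ) (p : Fin c → ℝ) (i : Fin c) :
    p i ∈ spectrum ℝ (conj U fun m => (p m : ℂ)) := by
  rw [← spectrum.algebraMap_mem_iff ℂ]
  have h : conj U (fun m => (p m : ℂ)) =
      ((⟨U, hU⟩ : Matrix.unitaryGroup (Fin c) ℂ) : Mat c) *
        Matrix.diagonal (fun m => (p m : ℂ)) *
        (star (⟨U, hU⟩ : Matrix.unitaryGroup (Fin c) ℂ) : Mat c) := by
    rw [conj, Matrix.star_eq_conjTranspose]
  rw [h, Unitary.spectrum_star_right_conjugate, _root_.spectrum_diagonal]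
  exact ⟨i, rfl⟩

lemma cfc_conj (hU : U ∈ Matrix.unitaryGroup (Fin c) ℂ) (p : Fin c → ℝ) (f : ℝ → ℝ) :
    cfc f (conj U fun m => (p m : ℂ)) = conj U (fun m => (f (p m) : ℂ)) := by
  set a := conj U (fun m => (p m : ℂ)) with ha_def
  have ha : IsSelfAdjoint a := conj_isSelfAdjoint p
  let q : Fin c → spectrum ℝ a := fun m => ⟨p m, mem_spectrum hU p m⟩
  let φ : C(spectrum ℝ a, ℝ) →⋆ₐ[ℝ] Mat c :=
    { toFun := fun g => conj U (fun m => (g (q m) : ℂ))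
      map_one' := by
        show conj U (fun m => (((1 : C(spectrum ℝ a, ℝ)) (q m) : ℝ) : ℂ)) = 1
        rw [show (fun m => (((1 : C(spectrum ℝ a, ℝ)) (q m) : ℝ) : ℂ)) = fun _ => 1 by
          funext m; simp]
        rw [conj, show Matrix.diagonal (fun _ : Fin c => (1:ℂ)) = 1 from Matrix.diagonal_one,
          Matrix.mul_one, hUU' hU]
      map_mul' := fun g h => by
        show conj U _ = conj U _ * conj U _
        rw [conj_mul hU]
        funext m; push_cast; simp
      map_zero' := by
        show conj U (fun m => (((0 : C(spectrum ℝ a, ℝ)) (q m) : ℝ) : ℂ)) = 0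
        rw [show (fun m => (((0 : C(spectrum ℝ a, ℝ)) (q m) : ℝ) : ℂ)) = fun _ => 0 by
          funext m; simp]
        rw [conj, show Matrix.diagonal (fun _ : Fin c => (0:ℂ)) = 0 from Matrix.diagonal_zero,
          Matrix.mul_zero, Matrix.zero_mul]
      map_add' := fun g h => by
        show conj U _ = conj U _ + conj U _
        rw [show (fun m => (((g + h) (q m) : ℝ) : ℂ))
            = fun m => ((g (q m) : ℝ) : ℂ) + ((h (q m) : ℝ) : ℂ) by
          funext m; push_cast; simp]
        rw [conj, conj, conj, ← Matrix.diagonal_add, Matrix.mul_add, Matrix.add_mul]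
      commutes' := fun r => by
        have h1 : ∀ m, (((algebraMap ℝ C(spectrum ℝ a, ℝ) r) (q m) : ℝ) : ℂ) = (r : ℂ) := by
          intro m; simp [Algebra.algebraMap_eq_smul_one]
        show conj U _ = _
        ext i j
        rw [conj_apply]
        have h2 : (U * Uᴴ) i j = (1 : Mat c) i j := by rw [hUU' hU]
        rw [Matrix.mul_apply] at h2
        calc ∑ m, U i m * (((algebraMap ℝ C(spectrum ℝ a, ℝ) r) (q m) : ℝ) : ℂ) * star (U j m)
            = (r : ℂ) * ∑ m, U i m * Uᴴ m j := by
              rw [Finset.mul_sum]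
              exact Finset.sum_congr rfl fun m _ => by
                rw [h1, Matrix.conjTranspose_apply]; ring
          _ = (r : ℂ) * (1 : Mat c) i j := by rw [h2]
          _ = _ := by
              simp [Matrix.one_apply, Matrix.algebraMap_matrix_apply]
      map_star' := fun g => by
        simp only [star_trivial]
        exact (conj_star_real (fun m => g (q m))).symm }
  have hfd : FiniteDimensional ℝ C(spectrum ℝ a, ℝ) :=
    FiniteDimensional.of_injective (ContinuousMap.coeFnLinearMap ℝ (M := ℝ))
      DFunLike.coe_injective
  have hφc : Continuous φ := φ.toAlgHom.toLinearMap.continuous_of_finiteDimensional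
  have hφ1 : φ (ContinuousMap.restrict (spectrum ℝ a) (ContinuousMap.id ℝ)) = a := rfl
  have hkey := cfcHom_eq_of_continuous_of_map_id ha φ hφc hφ1
  have hcont : ContinuousOn f (spectrum ℝ a) := by
    rw [continuousOn_iff_continuous_restrict]; fun_prop
  rw [cfc_apply f a ha hcont, hkey]
  rfl

lemma mpow_conj (hU : U ∈ Matrix.unitaryGroup (Fin c) ℂ) (p : Fin c → ℝ) (t : ℝ) :
    mpow (conj U fun m => (p m : ℂ)) t = conj U (fun m => ((p m ^ t : ℝ) : ℂ)) :=
  cfc_conj hU p (fun x => x ^ t)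

lemma Tinv_conj (hU : U ∈ Matrix.unitaryGroup (Fin c) ℂ) (p v : Fin c → ℝ)
    (hp : ∀ m, 0 < p m) :
    Tinv (conj U fun m => (p m : ℂ)) (conj U fun m => (v m : ℂ))
      = conj U (fun m => ((p m * v m : ℝ) : ℂ)) := by
  have key : ∀ l : ℝ, mpow (conj U fun m => (p m : ℂ)) (1 - l) * (conj U fun m => (v m : ℂ))
      * mpow (conj U fun m => (p m : ℂ)) l = conj U (fun m => ((p m * v m : ℝ) : ℂ)) := by
    intro l
    rw [mpow_conj hU, mpow_conj hU, conj_mul hU, conj_mul hU]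
    refine congrArg (conj U) (funext fun m => ?_)
    have h : p m ^ (1 - l) * v m * p m ^ l = p m * v m := by
      rw [mul_right_comm, ← Real.rpow_add (hp m), sub_add_cancel, Real.rpow_one]
    exact_mod_cast h
  ext i j
  simp only [Tinv, Matrix.of_apply]
  rw [intervalIntegral.integral_congr
    (g := fun _ : ℝ => conj U (fun m => ((p m * v m : ℝ) : ℂ)) i j)
    (fun l _ => by rw [key l])]
  simp

lemma Rrep_conj (hU : U ∈ Matrix.unitaryGroup (Fin c) ℂ) (p v : Fin c → ℝ)
    (hp : ∀ m, 0 < p m) :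
    Rrep (conj U fun m => (p m : ℂ)) (conj U fun m => (v m : ℂ))
      = conj U (fun m => ((Rp p v m : ℝ) : ℂ)) := by
  rw [Rrep, Tinv_conj hU p v hp, conj_mul hU, conj_trace hU, conj_smul, conj_sub]
  refine congrArg (conj U) (funext fun m => ?_)
  simp only [Rp]
  push_cast
  ring

lemma conj_sum_smul {V : Type*} (s : Finset V) (w : V → ℝ) (g : V → Fin c → ℝ) :
    ∑ k ∈ s, w k • conj U (fun m => ((g k m : ℝ) : ℂ))
      = conj U (fun m => ((∑ k ∈ s, w k * g k m : ℝ) : ℂ)) := by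
  ext a b
  rw [Matrix.sum_apply, conj_apply]
  have : ∀ m, ((∑ k ∈ s, w k * g k m : ℝ) : ℂ) = ∑ k ∈ s, (w k : ℂ) * (g k m : ℂ) := by
    intro m; push_cast; rfl
  simp only [this, Matrix.smul_apply, conj_apply, Finset.smul_sum]
  rw [Finset.sum_comm]
  refine Finset.sum_congr rfl fun m _ => ?_
  rw [Finset.mul_sum, Finset.sum_mul]
  refine Finset.sum_congr rfl fun k _ => ?_
  rw [Complex.real_smul]
  ring

lemma isDensity_conj (hU : U ∈ Matrix.unitaryGroup (Fin c) ℂ) (p : Fin c → ℝ)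
    (hp : InSimplex p) : IsDensity (conj U fun m => (p m : ℂ)) := by
  refine ⟨Matrix.PosDef.of_dotProduct_mulVec_pos (conj_isSelfAdjoint p) ?_, ?_⟩
  · intro x hx
    have hy : Uᴴ *ᵥ x ≠ 0 := by
      intro h0
      apply hx
      have : U *ᵥ (Uᴴ *ᵥ x) = x := by
        rw [Matrix.mulVec_mulVec, hUU' hU, Matrix.one_mulVec]
      rw [h0, Matrix.mulVec_zero] at this
      exact this.symm
    have hd : Matrix.PosDef (Matrix.diagonal (fun m => (p m : ℂ))) :=
      Matrix.PosDef.diagonal fun m => by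
        exact_mod_cast hp.1 m
    have := hd.dotProduct_mulVec_pos hy
    have hrw : star x ⬝ᵥ (conj U (fun m => (p m : ℂ)) *ᵥ x)
        = star (Uᴴ *ᵥ x) ⬝ᵥ (Matrix.diagonal (fun m => (p m : ℂ)) *ᵥ (Uᴴ *ᵥ x)) := by
      rw [conj, ← Matrix.mulVec_mulVec, ← Matrix.mulVec_mulVec,
        Matrix.star_mulVec, Matrix.conjTranspose_conjTranspose,
        ← Matrix.dotProduct_mulVec]
    rw [hrw]
    exact this
  · rw [conj_trace hU]
    have : ∑ m, ((p m : ℝ) : ℂ) = ((∑ m, p m : ℝ) : ℂ) := by push_cast; rfl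
    rw [this, hp.2, Complex.ofReal_one]


lemma ofReal_comp_deriv {f : ℝ → ℝ} {u t : ℝ} {s : Set ℝ} (hf : HasDerivWithinAt f u s t) :
    HasDerivWithinAt (fun y => ((f y : ℝ) : ℂ)) ((u : ℝ) : ℂ) s t := by
  exact hf.ofReal_comp


end Stmt19

open Stmt19 in
theorem stmt19 {c : ℕ} (hc : 2 ≤ c) {V : Type*} [Fintype V]
    (N : V → Finset V) (ω : V → V → ℝ) (hω : ∀ i k, 0 ≤ ω i k)
    (hsum : ∀ i, ∑ k ∈ N i, ω i k = 1)
    (U : Mat c) (hU : U ∈ Matrix.unitaryGroup (Fin c) ℂ)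
    (S : ℝ → V → Fin c → ℝ)
    (hS : ∀ t ∈ Set.Ici (0:ℝ), ∀ i, InSimplex (S t i))
    (hode : ∀ t ∈ Set.Ici (0:ℝ), ∀ i,
      HasDerivWithinAt (fun s => S s i)
        (Rp (S t i) (∑ k ∈ N i, ω i k • S t k)) (Set.Ici 0) t) :
    (∀ t ∈ Set.Ici (0:ℝ), ∀ i,
      IsDensity (U * Matrix.diagonal (fun a => (S t i a : ℂ)) * Uᴴ)) ∧
    (∀ t ∈ Set.Ici (0:ℝ), ∀ i, ∀ a b : Fin c,
      HasDerivWithinAt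
        (fun s => (U * Matrix.diagonal (fun a' => (S s i a' : ℂ)) * Uᴴ) a b)
        ((Rrep (U * Matrix.diagonal (fun a' => (S t i a' : ℂ)) * Uᴴ)
          (∑ k ∈ N i, ω i k •
            (U * Matrix.diagonal (fun a' => (S t k a' : ℂ)) * Uᴴ))) a b)
        (Set.Ici 0) t) := by

  constructor
  · intro t ht i
    exact isDensity_conj hU (S t i) (hS t ht i)
  · intro t ht i a b
    have hp := (hS t ht i).1
    have hfun : (fun s => (U * Matrix.diagonal (fun a' => (S s i a' : ℂ)) * Uᴴ) a b)
        = fun s => ∑ m, U a m * ((S s i m : ℝ) : ℂ) * star (U b m) :=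
      funext fun s => conj_apply _ a b
    have hX : (∑ k ∈ N i, ω i k • (U * Matrix.diagonal (fun a' => (S t k a' : ℂ)) * Uᴴ))
        = conj U (fun m => ((∑ k ∈ N i, ω i k * S t k m : ℝ) : ℂ)) :=
      conj_sum_smul (N i) (fun k => ω i k) (fun k => S t k)
    have hv : Rp (S t i) (∑ k ∈ N i, ω i k • S t k)
        = Rp (S t i) (fun m => ∑ k ∈ N i, ω i k * S t k m) := by
      have hveq : (∑ k ∈ N i, ω i k • S t k) = (fun m => ∑ k ∈ N i, ω i k * S t k m) := by
        funext m
        rw [Finset.sum_apply]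
        exact Finset.sum_congr rfl fun k _ => rfl
      rw [hveq]
    have htarget : (Rrep (U * Matrix.diagonal (fun a' => (S t i a' : ℂ)) * Uᴴ)
          (∑ k ∈ N i, ω i k • (U * Matrix.diagonal (fun a' => (S t k a' : ℂ)) * Uᴴ))) a b
        = ∑ m, U a m * ((Rp (S t i) (∑ k ∈ N i, ω i k • S t k) m : ℝ) : ℂ) * star (U b m) := by
      rw [hX, show (U * Matrix.diagonal (fun a' => (S t i a' : ℂ)) * Uᴴ)
        = conj U (fun m => ((S t i m : ℝ) : ℂ)) from rfl,
        Rrep_conj hU _ _ hp, conj_apply, hv]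
    rw [htarget, hfun]
    refine HasDerivWithinAt.fun_sum fun m _ => ?_
    exact ((ofReal_comp_deriv ((hasDerivWithinAt_pi.mp (hode t ht i)) m)).const_mul
      (U a m)).mul_const (star (U b m))
end
end
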